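/- arXiv:1803.07550 — 5 statements merged into one kernel-verified Lean document; each statement's English description precedes it below -/
import Mathlib

section
/- Let A be a closed densely defined operator from a Hilbert space H1 to a Hilbert space H2. Then the operators (I + A*A)^{-1} and A(I + A*A)^{-1} are everywhere defined and bounded, and (I + A*A)^{-1} is self-adjoint. -/
/-!
The graph `G(A)` of a closed operator is a closed subspace of the Hilbert sum `H₁ ⊕₂ H₂`, so it
has an orthogonal projection `P`. Write `P (x, 0) = (R x, S x)`. Then `R x ∈ dom A` with
`A (R x) = S x`, and `(x - R x, -S x) ⊥ G(A)` says exactly that `S x ∈ dom A*` with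
`A* (S x) = x - R x`. Both `R` and `S` are bounded since `P` is, and `R = ι* P ι` for the
isometric embedding `ι x = (x, 0)`, so `R` is self-adjoint because `P` is.
-/

open scoped InnerProductSpace LinearPMap

namespace WithLp

variable (p : ENNReal) (𝕜 E F : Type*) [Semiring 𝕜] [TopologicalSpace E] [TopologicalSpace F]
  [AddCommGroup E] [AddCommGroup F] [Module 𝕜 E] [Module 𝕜 F]

noncomputable def inlL : E →L[𝕜] WithLp p (E × F) :=
  (prodContinuousLinearEquiv p 𝕜 E F).symm.toContinuousLinearMap ∘L .inl 𝕜 E F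

@[simp]
theorem inlL_apply (x : E) : inlL p 𝕜 E F x = toLp p (x, 0) := rfl

end WithLp

section

variable {𝕜 E F : Type*} [RCLike 𝕜] [NormedAddCommGroup E] [InnerProductSpace 𝕜 E]
  [NormedAddCommGroup F] [InnerProductSpace 𝕜 F] [CompleteSpace E] [CompleteSpace F]

theorem WithLp.adjoint_inlL : ContinuousLinearMap.adjoint (inlL 2 𝕜 E F) = fstL 2 𝕜 E F := by
  refine ((ContinuousLinearMap.eq_adjoint_iff (fstL 2 𝕜 E F) _).mpr fun z x => ?_).symm
  simp [prod_inner_apply]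

end

namespace LinearPMap

theorem exists_apply_eq_of_mem_graph {R E F : Type*} [Ring R] [AddCommGroup E] [Module R E]
    [AddCommGroup F] [Module R F] {T : E →ₗ.[R] F} {x : E} {y : F} (h : (x, y) ∈ T.graph) :
    ∃ hx : x ∈ T.domain, T ⟨x, hx⟩ = y :=
  ⟨mem_domain_of_mem_graph h, ((image_iff _).mpr h).symm⟩

variable {𝕜 E F : Type*} [RCLike 𝕜] [NormedAddCommGroup E] [InnerProductSpace 𝕜 E]
  [NormedAddCommGroup F] [InnerProductSpace 𝕜 F] {T : E →ₗ.[𝕜] F}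

def graphL2 (T : E →ₗ.[𝕜] F) : Submodule 𝕜 (WithLp 2 (E × F)) :=
  T.graph.comap (WithLp.linearEquiv 2 𝕜 (E × F)).toLinearMap

theorem isClosed_graphL2 (hT : T.IsClosed) :
    _root_.IsClosed (T.graphL2 : Set (WithLp 2 (E × F))) :=
  hT.preimage (WithLp.prod_continuous_ofLp 2 E F)

theorem mem_graph_adjoint_of_mem_orthogonal_graphL2 [CompleteSpace E]
    (hT : Dense (T.domain : Set E)) {z : WithLp 2 (E × F)} (hz : z ∈ T.graphL2ᗮ) :
    (-z.snd, z.fst) ∈ T†.graph := by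
  rw [adjoint_graph_eq_graph_adjoint hT, Submodule.mem_adjoint_iff]
  intro a b hab
  have h := hz (WithLp.toLp 2 (a, b)) hab
  rw [WithLp.prod_inner_apply] at h
  simp only [WithLp.ofLp_fst, WithLp.ofLp_snd, inner_neg_right] at h ⊢
  linear_combination -h

variable [CompleteSpace E] [CompleteSpace F]

/-- `x ↦ P (x, 0)` for the orthogonal projection `P` onto the graph; its components are
`(1 + T†T)⁻¹ x` and `T (1 + T†T)⁻¹ x`. -/
noncomputable def graphProjection (hT : T.IsClosed) : E →L[𝕜] WithLp 2 (E × F) :=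
  have := (isClosed_graphL2 hT).completeSpace_coe
  T.graphL2.starProjection ∘L WithLp.inlL 2 𝕜 E F

theorem graphProjection_mem_graph (hT : T.IsClosed) (x : E) :
    ((graphProjection hT x).fst, (graphProjection hT x).snd) ∈ T.graph :=
  have := (isClosed_graphL2 hT).completeSpace_coe
  T.graphL2.starProjection_apply_mem _

theorem graphProjection_mem_graph_adjoint (hT : T.IsClosed) (hd : Dense (T.domain : Set E))
    (x : E) : ((graphProjection hT x).snd, x - (graphProjection hT x).fst) ∈ T†.graph := by
  have := (isClosed_graphL2 hT).completeSpace_coe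
  simpa [graphProjection, -mem_graph_iff] using mem_graph_adjoint_of_mem_orthogonal_graphL2 hd
    (T.graphL2.sub_starProjection_mem_orthogonal (WithLp.inlL 2 𝕜 E F x))

theorem isSelfAdjoint_fstL_comp_graphProjection (hT : T.IsClosed) :
    IsSelfAdjoint (WithLp.fstL 2 𝕜 E F ∘L graphProjection hT) := by
  have := (isClosed_graphL2 hT).completeSpace_coe
  rw [← WithLp.adjoint_inlL]
  exact (isSelfAdjoint_starProjection T.graphL2).adjoint_conj _

end LinearPMap

/-- Von Neumann's theorem: for a closed densely defined operator `A`, the operators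
`(I + A*A)⁻¹` (here `R`) and `A(I + A*A)⁻¹` (here `S`) are everywhere defined and bounded,
and `(I + A*A)⁻¹` is self-adjoint. -/
theorem vonNeumann_inverse_bounded {H1 H2 : Type*}
    [NormedAddCommGroup H1] [InnerProductSpace ℂ H1] [CompleteSpace H1]
    [NormedAddCommGroup H2] [InnerProductSpace ℂ H2] [CompleteSpace H2]
    (A : H1 →ₗ.[ℂ] H2) (hclosed : A.IsClosed) (hdense : Dense (A.domain : Set H1)) :
    ∃ (R : H1 →L[ℂ] H1) (S : H1 →L[ℂ] H2), IsSelfAdjoint R ∧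
      ∀ x : H1, ∃ hx : R x ∈ A.domain, A ⟨R x, hx⟩ = S x ∧
        ∃ hy : S x ∈ A.adjoint.domain, R x + A.adjoint ⟨S x, hy⟩ = x := by
  refine ⟨WithLp.fstL 2 ℂ H1 H2 ∘L LinearPMap.graphProjection hclosed,
    WithLp.sndL 2 ℂ H1 H2 ∘L LinearPMap.graphProjection hclosed,
    LinearPMap.isSelfAdjoint_fstL_comp_graphProjection hclosed, fun x => ?_⟩
  obtain ⟨hx, hAx⟩ := LinearPMap.exists_apply_eq_of_mem_graph
    (LinearPMap.graphProjection_mem_graph hclosed x)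
  obtain ⟨hy, hAy⟩ := LinearPMap.exists_apply_eq_of_mem_graph
    (LinearPMap.graphProjection_mem_graph_adjoint hclosed hdense x)
  exact ⟨hx, hAx, hy, (congrArg (_ + ·) hAy).trans (add_sub_cancel _ _)⟩
end

section
/- Let A be a bounded operator from H1 to H2 with Moore–Penrose inverse B. Then for every x ∈ R(B), ‖x‖² = ‖(I + BB*)^{-1/2} x‖² + ‖(I + A*A)^{-1/2} x‖². -/
open scoped InnerProductSpace

variable {H1 H2 : Type*}
  [NormedAddCommGroup H1] [InnerProductSpace ℂ H1] [CompleteSpace H1]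
  [NormedAddCommGroup H2] [InnerProductSpace ℂ H2] [CompleteSpace H2]

/-- `B` is the Moore–Penrose inverse of the bounded operator `A : H1 → H2`: a closed densely
defined operator with domain `R(A) ⊕ N(A*)`, null space `N(A*)`, satisfying `ABA = A`,
`BAB = B`, `AB ⊆ P_{cl R(A)}` and `BA ⊆ P_{cl R(B)}`. -/
def IsMPInverse (A : H1 →L[ℂ] H2) (B : H2 →ₗ.[ℂ] H1) : Prop :=
  B.IsClosed ∧ Dense (B.domain : Set H2) ∧
    B.domain = LinearMap.range (A : H1 →ₗ[ℂ] H2) ⊔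
      LinearMap.ker (ContinuousLinearMap.adjoint A : H2 →ₗ[ℂ] H1) ∧
    (∀ y : B.domain, B y = 0 ↔ ContinuousLinearMap.adjoint A (y : H2) = 0) ∧
    (∀ x : H1, ∃ h : A x ∈ B.domain, A (B ⟨A x, h⟩) = A x) ∧
    (∀ y : B.domain, ∃ h : A (B y) ∈ B.domain, B ⟨A (B y), h⟩ = B y) ∧
    (∀ y : B.domain, A (B y) ∈ (LinearMap.range (A : H1 →ₗ[ℂ] H2)).topologicalClosure ∧
      ∀ z ∈ (LinearMap.range (A : H1 →ₗ[ℂ] H2)).topologicalClosure, ⟪(y : H2) - A (B y), z⟫_ℂ = 0) ∧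
    (∀ (x : H1) (h : A x ∈ B.domain),
      B ⟨A x, h⟩ ∈ (LinearMap.range B.toFun).topologicalClosure ∧
      ∀ z ∈ (LinearMap.range B.toFun).topologicalClosure, ⟪x - B ⟨A x, h⟩, z⟫_ℂ = 0)

/-- For a bounded operator `A` with Moore–Penrose inverse `B`, with `S = (I + BB*)^{-1/2}`
and `T = (I + A*A)^{-1/2}` (positive square roots), every `x ∈ R(B)` satisfies
`‖x‖² = ‖(I + BB*)^{-1/2} x‖² + ‖(I + A*A)^{-1/2} x‖²`. -/
theorem norm_sq_decomp_range (A : H1 →L[ℂ] H2) (B : H2 →ₗ.[ℂ] H1) (hB : IsMPInverse A B)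
    (S : H1 →L[ℂ] H1) (hSpos : S.IsPositive)
    (hS : ∀ x : H1, ∃ h1 : S (S x) ∈ B.adjoint.domain,
      ∃ h2 : B.adjoint ⟨S (S x), h1⟩ ∈ B.domain,
      S (S x) + B ⟨B.adjoint ⟨S (S x), h1⟩, h2⟩ = x)
    (T : H1 →L[ℂ] H1) (hTpos : T.IsPositive)
    (hT : ∀ x : H1, T (T x) + ContinuousLinearMap.adjoint A (A (T (T x))) = x) :
    ∀ x ∈ LinearMap.range B.toFun, ‖x‖ ^ 2 = ‖S x‖ ^ 2 + ‖T x‖ ^ 2 := by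
  obtain ⟨hclosed, hdense, hdom, hker, hABA, hBAB, hAB, hBA⟩ := hB
  have hadj := LinearPMap.adjoint_isFormalAdjoint hdense
  intro x hx
  obtain ⟨h1, h2, hSx⟩ := hS x
  have hBp_mem : B ⟨B.adjoint ⟨S (S x), h1⟩, h2⟩ ∈ LinearMap.range B.toFun :=
    ⟨⟨B.adjoint ⟨S (S x), h1⟩, h2⟩, rfl⟩
  have hu_mem : S (S x) ∈ LinearMap.range B.toFun := by
    have heq : S (S x) = x - B ⟨B.adjoint ⟨S (S x), h1⟩, h2⟩ := eq_sub_of_add_eq hSx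
    rw [heq]; exact Submodule.sub_mem _ hx hBp_mem
  have hu_cl : S (S x) ∈ (LinearMap.range B.toFun).topologicalClosure :=
    Submodule.le_topologicalClosure _ hu_mem
  -- key1 : A* (B† (S² x)) = S² x
  have key1 : ContinuousLinearMap.adjoint A (B.adjoint ⟨S (S x), h1⟩) = S (S x) := by
    apply ext_inner_right ℂ
    intro z
    obtain ⟨hz, -⟩ := hABA z
    have h8 := hBA z hz
    have step1 : ⟪ContinuousLinearMap.adjoint A (B.adjoint ⟨S (S x), h1⟩), z⟫_ℂ
        = ⟪(B.adjoint ⟨S (S x), h1⟩ : H2), A z⟫_ℂ :=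
      ContinuousLinearMap.adjoint_inner_left A z _
    have step2 : ⟪(B.adjoint ⟨S (S x), h1⟩ : H2), A z⟫_ℂ
        = ⟪S (S x), (B ⟨A z, hz⟩ : H1)⟫_ℂ := hadj ⟨S (S x), h1⟩ ⟨A z, hz⟩
    have h0 : ⟪z - B ⟨A z, hz⟩, S (S x)⟫_ℂ = 0 := h8.2 (S (S x)) hu_cl
    have h0' : ⟪S (S x), z - B ⟨A z, hz⟩⟫_ℂ = 0 := by
      rw [← inner_conj_symm, h0, map_zero]
    rw [inner_sub_right, sub_eq_zero] at h0'
    rw [step1, step2, ← h0']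
  -- key2 : A* (A (B p)) = A* p
  have key2 : ContinuousLinearMap.adjoint A (A (B ⟨B.adjoint ⟨S (S x), h1⟩, h2⟩))
      = ContinuousLinearMap.adjoint A (B.adjoint ⟨S (S x), h1⟩) := by
    apply ext_inner_right ℂ
    intro w
    have h7 := hAB ⟨B.adjoint ⟨S (S x), h1⟩, h2⟩
    have h0 : ⟪(B.adjoint ⟨S (S x), h1⟩ : H2) - A (B ⟨B.adjoint ⟨S (S x), h1⟩, h2⟩),
        A w⟫_ℂ = 0 :=
      h7.2 (A w) (Submodule.le_topologicalClosure _ ⟨w, rfl⟩)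
    rw [inner_sub_left, sub_eq_zero] at h0
    rw [ContinuousLinearMap.adjoint_inner_left, ContinuousLinearMap.adjoint_inner_left]
    exact h0.symm
  have key3 := key2.trans key1
  -- (I + A*A) (B p) = x
  have hIBp : B ⟨B.adjoint ⟨S (S x), h1⟩, h2⟩
      + ContinuousLinearMap.adjoint A (A (B ⟨B.adjoint ⟨S (S x), h1⟩, h2⟩)) = x := by
    rw [key3, add_comm]; exact hSx
  -- injectivity of I + A*A gives T² x = B p
  have hmain : T (T x) = B ⟨B.adjoint ⟨S (S x), h1⟩, h2⟩ := by
    set Bp : H1 := (B ⟨B.adjoint ⟨S (S x), h1⟩, h2⟩ : H1) with hBpdef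
    have hd0 : (T (T x) - Bp)
        + ContinuousLinearMap.adjoint A (A (T (T x) - Bp)) = 0 := by
      have hTx := hT x
      have hexp : (T (T x) - Bp) + ContinuousLinearMap.adjoint A (A (T (T x) - Bp))
          = (T (T x) + ContinuousLinearMap.adjoint A (A (T (T x))))
            - (Bp + ContinuousLinearMap.adjoint A (A Bp)) := by
        rw [map_sub, map_sub]; abel
      rw [hexp, hTx, hIBp, sub_self]
    have hinner : ⟪T (T x) - Bp, T (T x) - Bp⟫_ℂ
        + ⟪A (T (T x) - Bp), A (T (T x) - Bp)⟫_ℂ = 0 := by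
      have h0 : ⟪(T (T x) - Bp) + ContinuousLinearMap.adjoint A (A (T (T x) - Bp)),
          T (T x) - Bp⟫_ℂ = 0 := by rw [hd0, inner_zero_left]
      rwa [inner_add_left, ContinuousLinearMap.adjoint_inner_left] at h0
    rw [inner_self_eq_norm_sq_to_K, inner_self_eq_norm_sq_to_K] at hinner
    have hre : ‖T (T x) - Bp‖ ^ 2 + ‖A (T (T x) - Bp)‖ ^ 2 = (0 : ℝ) :=
      RCLike.ofReal_eq_zero.mp (by exact_mod_cast hinner)
    have hnd : ‖T (T x) - Bp‖ = 0 := by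
      nlinarith [sq_nonneg ‖T (T x) - Bp‖, sq_nonneg ‖A (T (T x) - Bp)‖,
        norm_nonneg (T (T x) - Bp)]
    exact sub_eq_zero.mp (norm_eq_zero.mp hnd)
  -- conclusion
  have hxeq : x = S (S x) + T (T x) := by rw [hmain, hSx]
  have hSsym : ⟪S (S x), x⟫_ℂ = ⟪S x, S x⟫_ℂ := by
    nth_rewrite 1 [← hSpos.isSelfAdjoint.adjoint_eq]
    exact ContinuousLinearMap.adjoint_inner_left S x (S x)
  have hTsym : ⟪T (T x), x⟫_ℂ = ⟪T x, T x⟫_ℂ := by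
    nth_rewrite 1 [← hTpos.isSelfAdjoint.adjoint_eq]
    exact ContinuousLinearMap.adjoint_inner_left T x (T x)
  have hC : ⟪x, x⟫_ℂ = ⟪S x, S x⟫_ℂ + ⟪T x, T x⟫_ℂ := by
    nth_rewrite 1 [hxeq]
    rw [inner_add_left, hSsym, hTsym]
  rw [inner_self_eq_norm_sq_to_K, inner_self_eq_norm_sq_to_K,
    inner_self_eq_norm_sq_to_K] at hC
  exact_mod_cast hC
end

section
/- Let A ∈ B(H1, H2) with Moore–Penrose inverse B. Then the operator B*(I + BB*)^{-1/2} : H1 → H2 is bounded with closed range, and there is a constant c > 0 such that c‖x‖ ≤ ‖B*(I + BB*)^{-1/2} x‖ ≤ ‖x‖ for all x ∈ R(B); in particular B*(I + BB*)^{-1/2} restricts to an isomorphism from N(B*)^⊥ = cl R(B) onto cl R(B*). -/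
open scoped InnerProductSpace

variable {H1 H2 : Type*}
  [NormedAddCommGroup H1] [InnerProductSpace ℂ H1] [CompleteSpace H1]
  [NormedAddCommGroup H2] [InnerProductSpace ℂ H2] [CompleteSpace H2]

/-!
Let `S = (I + BB*)^{-1/2}`. For vectors `S w` one computes
`‖B* S (S w)‖² = ‖S w‖² - ‖S² w‖²`, so `B* S` extends from the dense range of `S` to a contraction
`C` with `‖C x‖² + ‖S x‖² = ‖x‖²`, and the definition of the adjoint gives `C x = B* S x`
everywhere. `S` is the identity on `R(B)^⊥`, so `C` vanishes there, and every `u ∈ dom B*` equals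
`S (S u + C* B* u)`; hence `R(C) = C (cl R(B)) = R(B*)`. For `x ∈ cl R(B)` we have `x = B A x`, so
`‖S x‖² ≤ ⟪S x, x⟫ = ⟪C x, A x⟫ ≤ ‖A‖ ‖x‖ ‖C x‖`, which with the norm identity gives
`‖x‖ ≤ (1 + ‖A‖) ‖C x‖`. This lower bound makes `C (cl R(B))` closed and `C` injective on `cl R(B)`.
-/

namespace ContinuousLinearMap

variable {𝕜 E : Type*} [RCLike 𝕜] [NormedAddCommGroup E] [InnerProductSpace 𝕜 E]

lemma IsPositive.apply_eq_of_apply_apply_eq {S : E →L[𝕜] E} (hS : S.IsPositive) {u : E}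
    (h : S (S u) = u) : S u = u := by
  set w := S u - u
  have hw : S w = -w := by
    simp only [w, map_sub, h]
    abel
  have hsum : ‖w‖ ^ 2 + RCLike.re ⟪S w, w⟫_𝕜 = 0 := by
    rw [hw, inner_neg_left, map_neg, ← @inner_self_eq_norm_sq 𝕜]
    ring
  have hw0 : ‖w‖ = 0 := by nlinarith [hS.re_inner_nonneg_left w, norm_nonneg w]
  exact sub_eq_zero.mp (norm_eq_zero.mp hw0)

lemma _root_.IsSelfAdjoint.denseRange_of_injective [CompleteSpace E] {T : E →L[𝕜] E}
    (hT : IsSelfAdjoint T) (hinj : Function.Injective T) : DenseRange T := by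
  have : (LinearMap.range (T : E →ₗ[𝕜] E))ᗮ = ⊥ := by
    rw [(isSelfAdjoint_iff_isSymmetric.mp hT).orthogonal_range,
      LinearMap.ker_eq_bot_of_injective hinj]
  rw [DenseRange, ← T.coe_coe, ← LinearMap.coe_range,
    Submodule.dense_iff_topologicalClosure_eq_top]
  exact Submodule.topologicalClosure_eq_top_iff.mpr this

lemma IsPositive.norm_apply_sq_le_re_inner {H : Type*} [NormedAddCommGroup H]
    [InnerProductSpace ℂ H] [CompleteSpace H] {S : H →L[ℂ] H} (hS : S.IsPositive) (hS1 : ‖S‖ ≤ 1)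
    (x : H) : ‖S x‖ ^ 2 ≤ (⟪S x, x⟫_ℂ).re := by
  have h0 : 0 ≤ S := (nonneg_iff_isPositive S).mpr hS
  have hsq : S ^ 2 ≤ S ^ 1 :=
    CStarAlgebra.pow_antitone h0 ((CStarAlgebra.norm_le_one_iff_of_nonneg S).mp hS1) one_le_two
  have h := ((le_def _ _).mp hsq).re_inner_nonneg_left x
  change 0 ≤ RCLike.re ⟪S x - S (S x), x⟫_ℂ at h
  rw [inner_sub_left, map_sub, hS.inner_left_eq_inner_right (S x) x, inner_self_eq_norm_sq] at h
  simpa [sub_nonneg] using h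

end ContinuousLinearMap

lemma ContinuousLinearMap.isClosed_image_of_le_mul_norm {𝕜 E F : Type*}
    [NontriviallyNormedField 𝕜] [NormedAddCommGroup E] [NormedSpace 𝕜 E] [CompleteSpace E]
    [NormedAddCommGroup F] [NormedSpace 𝕜 F] (f : E →L[𝕜] F) {K : Submodule 𝕜 E}
    (hK : IsClosed (K : Set E)) {c : NNReal} (hc : ∀ x ∈ K, ‖x‖ ≤ c * ‖f x‖) :
    IsClosed (f '' K) := by
  have : CompleteSpace K := hK.completeSpace_coe
  have hanti : AntilipschitzWith c (f ∘L K.subtypeL) :=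
    ContinuousLinearMap.antilipschitz_of_bound _ fun x => hc x x.2
  have hrange : Set.range (f ∘L K.subtypeL) = f '' K := by
    rw [ContinuousLinearMap.coe_comp, Submodule.coe_subtypeL, Set.range_comp, Submodule.coe_subtype,
      Subtype.range_coe]
  exact hrange ▸ hanti.isClosed_range (f ∘L K.subtypeL).uniformContinuous

open scoped LinearPMap

namespace LinearPMap

variable {𝕜 E F : Type*} [RCLike 𝕜] [NormedAddCommGroup E] [InnerProductSpace 𝕜 E]
  [NormedAddCommGroup F] [InnerProductSpace 𝕜 F] [CompleteSpace E] {T : E →ₗ.[𝕜] F}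

lemma exists_clm_eq_adjoint_comp {F' G : Type*} [NormedAddCommGroup F'] [NormedSpace 𝕜 F']
    [AddCommGroup G] [Module 𝕜 G] (hT : Dense (T.domain : Set E)) (R : F' →L[𝕜] F)
    {e : G →ₗ[𝕜] F'} (he : DenseRange e) (hRe : ∀ w, R (e w) ∈ T†.domain)
    (K : ℝ) (hK : ∀ w, ‖T† ⟨R (e w), hRe w⟩‖ ≤ K * ‖e w‖) :
    ∃ C : F' →L[𝕜] E, ∃ hR : ∀ x, R x ∈ T†.domain, ∀ x, T† ⟨R x, hR x⟩ = C x := by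
  let f : G →ₗ[𝕜] E := T†.toFun ∘ₗ ((R : F' →ₗ[𝕜] F) ∘ₗ e).codRestrict T†.domain hRe
  let C : F' →L[𝕜] E := f.extendOfNorm e
  have hCe : ∀ w, C (e w) = T† ⟨R (e w), hRe w⟩ := LinearMap.extendOfNorm_eq he ⟨K, hK⟩
  have hpair : ∀ x (v : T.domain), ⟪C x, (v : E)⟫_𝕜 = ⟪R x, T v⟫_𝕜 := by
    intro x v
    refine he.induction_on x (isClosed_eq (by fun_prop) (by fun_prop)) fun w => ?_
    rw [hCe]
    exact adjoint_isFormalAdjoint hT _ v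
  have hR : ∀ x, R x ∈ T†.domain := fun x => mem_adjoint_domain_of_exists _ ⟨C x, hpair x⟩
  exact ⟨C, hR, fun x => adjoint_apply_eq hT ⟨R x, hR x⟩ (hpair x)⟩

lemma adjoint_apply_eq_zero_of_mem_orthogonal (hT : Dense (T.domain : Set E)) (y : T†.domain)
    (hy : (y : F) ∈ (LinearMap.range T.toFun)ᗮ) : T† y = 0 :=
  adjoint_apply_eq hT y fun v => by
    rw [inner_zero_left]
    exact (Submodule.inner_left_of_mem_orthogonal (LinearMap.mem_range_self _ v) hy).symm

end LinearPMap

section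

variable {E F : Type*} [NormedAddCommGroup E] [InnerProductSpace ℂ E]
  [NormedAddCommGroup F] [InnerProductSpace ℂ F] [CompleteSpace F]

/-- `S = (I + B B†)^{-1/2}`, encoded by positivity of `S` and `(I + B B†) S² = I`. -/
structure IsInvSqrtOneAddMulAdjoint (B : F →ₗ.[ℂ] E) (S : E →L[ℂ] E) : Prop where
  isPositive : S.IsPositive
  rightInverse : ∀ x : E, ∃ h1 : S (S x) ∈ B†.domain, ∃ h2 : B† ⟨S (S x), h1⟩ ∈ B.domain,
    S (S x) + B ⟨B† ⟨S (S x), h1⟩, h2⟩ = x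

namespace IsInvSqrtOneAddMulAdjoint

variable {B : F →ₗ.[ℂ] E} {S : E →L[ℂ] E}

lemma sub_apply_apply_mem_range (hS : IsInvSqrtOneAddMulAdjoint B S) (x : E) :
    x - S (S x) ∈ LinearMap.range B.toFun := by
  obtain ⟨_, _, heq⟩ := hS.rightInverse x
  exact ⟨_, eq_sub_of_add_eq' heq⟩

lemma norm_adjoint_apply_apply_sq (hB : Dense (B.domain : Set F))
    (hS : IsInvSqrtOneAddMulAdjoint B S) (w : E) (h : S (S w) ∈ B†.domain) :
    ‖B† ⟨S (S w), h⟩‖ ^ 2 = ‖S w‖ ^ 2 - ‖S (S w)‖ ^ 2 := by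
  obtain ⟨h1, h2, heq⟩ := hS.rightInverse w
  have hpair : ⟪B† ⟨S (S w), h1⟩, B† ⟨S (S w), h1⟩⟫_ℂ = ⟪S (S w), B ⟨_, h2⟩⟫_ℂ :=
    LinearPMap.adjoint_isFormalAdjoint hB _ ⟨_, h2⟩
  rw [eq_sub_of_add_eq' heq, inner_sub_right, hS.isPositive.inner_left_eq_inner_right (S w) w,
    inner_self_eq_norm_sq_to_K, inner_self_eq_norm_sq_to_K, inner_self_eq_norm_sq_to_K] at hpair
  exact_mod_cast hpair

lemma injective (hS : IsInvSqrtOneAddMulAdjoint B S) : Function.Injective S := by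
  refine (injective_iff_map_eq_zero S).mpr fun x hx => ?_
  obtain ⟨h1, h2, heq⟩ := hS.rightInverse x
  have hy : (⟨S (S x), h1⟩ : B†.domain) = 0 := by simp [hx]
  have hz : (⟨B† ⟨S (S x), h1⟩, h2⟩ : B.domain) = 0 := by simp [hy]
  rw [← heq, hz, hx, map_zero, zero_add]
  exact B.map_zero

lemma apply_eq_self_of_mem_orthogonal (hS : IsInvSqrtOneAddMulAdjoint B S) {u : E}
    (hu : u ∈ (LinearMap.range B.toFun)ᗮ) : S u = u := by
  refine hS.isPositive.apply_eq_of_apply_apply_eq ?_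
  have hSSu : S (S u) ∈ (LinearMap.range B.toFun)ᗮ := by
    rintro _ ⟨v, rfl⟩
    have hmem : S (S (B v)) ∈ LinearMap.range B.toFun := by
      rw [← sub_sub_cancel (B v) (S (S (B v)))]
      exact sub_mem (LinearMap.mem_range_self _ v) (hS.sub_apply_apply_mem_range _)
    rw [← hS.isPositive.inner_left_eq_inner_right, ← hS.isPositive.inner_left_eq_inner_right]
    exact Submodule.inner_right_of_mem_orthogonal hmem hu
  have h0 : u - S (S u) ∈ LinearMap.range B.toFun ⊓ (LinearMap.range B.toFun)ᗮ :=
    ⟨hS.sub_apply_apply_mem_range u, sub_mem hu hSSu⟩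
  rw [Submodule.inf_orthogonal_eq_bot, Submodule.mem_bot, sub_eq_zero] at h0
  exact h0.symm

variable {C : E →L[ℂ] F}

lemma apply_eq_zero_of_mem_orthogonal (hB : Dense (B.domain : Set F))
    (hS : IsInvSqrtOneAddMulAdjoint B S) (hC : ∀ x, ∃ h : S x ∈ B†.domain, C x = B† ⟨S x, h⟩)
    {u : E} (hu : u ∈ (LinearMap.range B.toFun)ᗮ) : C u = 0 := by
  obtain ⟨h, hCu⟩ := hC u
  rw [hCu]
  refine LinearPMap.adjoint_apply_eq_zero_of_mem_orthogonal hB _ ?_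
  rwa [Submodule.coe_mk, hS.apply_eq_self_of_mem_orthogonal hu]

variable [CompleteSpace E]

lemma denseRange (hS : IsInvSqrtOneAddMulAdjoint B S) : DenseRange S :=
  hS.isPositive.isSelfAdjoint.denseRange_of_injective hS.injective

lemma exists_clm_eq_adjoint_comp (hB : Dense (B.domain : Set F))
    (hS : IsInvSqrtOneAddMulAdjoint B S) :
    ∃ C : E →L[ℂ] F, ∀ x, ∃ h : S x ∈ B†.domain, C x = B† ⟨S x, h⟩ := by
  have hdom : ∀ w, S (S w) ∈ B†.domain := fun w => (hS.rightInverse w).1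
  have hbound : ∀ w, ‖B† ⟨S (S w), hdom w⟩‖ ≤ 1 * ‖S w‖ := fun w => by
    rw [one_mul, ← sq_le_sq₀ (norm_nonneg _) (norm_nonneg _), hS.norm_adjoint_apply_apply_sq hB]
    linarith [sq_nonneg ‖S (S w)‖]
  obtain ⟨C, hR, hC⟩ := LinearPMap.exists_clm_eq_adjoint_comp hB S
    (e := (S : E →ₗ[ℂ] E)) hS.denseRange hdom 1 hbound
  exact ⟨C, fun x => ⟨hR x, (hC x).symm⟩⟩

lemma norm_sq_add_norm_sq (hB : Dense (B.domain : Set F)) (hS : IsInvSqrtOneAddMulAdjoint B S)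
    (hC : ∀ x, ∃ h : S x ∈ B†.domain, C x = B† ⟨S x, h⟩) (x : E) :
    ‖C x‖ ^ 2 + ‖S x‖ ^ 2 = ‖x‖ ^ 2 :=
  hS.denseRange.induction_on x (isClosed_eq (by fun_prop) (by fun_prop)) fun w => by
    obtain ⟨h, hCw⟩ := hC (S w)
    rw [hCw, hS.norm_adjoint_apply_apply_sq hB w h]
    ring

lemma norm_apply_le (hB : Dense (B.domain : Set F)) (hS : IsInvSqrtOneAddMulAdjoint B S)
    (hC : ∀ x, ∃ h : S x ∈ B†.domain, C x = B† ⟨S x, h⟩) (x : E) : ‖C x‖ ≤ ‖x‖ := by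
  rw [← sq_le_sq₀ (norm_nonneg _) (norm_nonneg _), ← hS.norm_sq_add_norm_sq hB hC x]
  linarith [sq_nonneg ‖S x‖]

lemma opNorm_le_one (hB : Dense (B.domain : Set F)) (hS : IsInvSqrtOneAddMulAdjoint B S)
    (hC : ∀ x, ∃ h : S x ∈ B†.domain, C x = B† ⟨S x, h⟩) : ‖S‖ ≤ 1 :=
  S.opNorm_le_bound zero_le_one fun x => by
    rw [one_mul, ← sq_le_sq₀ (norm_nonneg _) (norm_nonneg _), ← hS.norm_sq_add_norm_sq hB hC x]
    linarith [sq_nonneg ‖C x‖]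

lemma image_closure_range_eq_range (hB : Dense (B.domain : Set F))
    (hS : IsInvSqrtOneAddMulAdjoint B S) (hC : ∀ x, ∃ h : S x ∈ B†.domain, C x = B† ⟨S x, h⟩) :
    C '' ((LinearMap.range B.toFun).topologicalClosure : Set E) = Set.range C := by
  set M := (LinearMap.range B.toFun).topologicalClosure
  refine (Set.image_subset_range _ _).antisymm ?_
  rintro _ ⟨x, rfl⟩
  have hperp : x - M.starProjection x ∈ (LinearMap.range B.toFun)ᗮ := by
    rw [← Submodule.orthogonal_closure]
    exact M.sub_starProjection_mem_orthogonal x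
  refine ⟨M.starProjection x, M.starProjection_apply_mem x, ?_⟩
  have h0 := hS.apply_eq_zero_of_mem_orthogonal hB hC hperp
  rwa [map_sub, sub_eq_zero, eq_comm] at h0

lemma range_eq_range_adjoint (hB : Dense (B.domain : Set F))
    (hS : IsInvSqrtOneAddMulAdjoint B S) (hC : ∀ x, ∃ h : S x ∈ B†.domain, C x = B† ⟨S x, h⟩) :
    Set.range C = LinearMap.range B†.toFun := by
  refine subset_antisymm ?_ ?_
  · rintro _ ⟨x, rfl⟩
    obtain ⟨h, hCx⟩ := hC x
    exact ⟨⟨S x, h⟩, hCx.symm⟩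
  rintro _ ⟨u, rfl⟩
  set y := S u + C.adjoint (B† u)
  have hSy : S y = u := ext_inner_right ℂ fun w => by
    obtain ⟨h1, h2, heq⟩ := hS.rightInverse w
    obtain ⟨_, hCSw⟩ := hC (S w)
    calc ⟪S y, w⟫_ℂ = ⟪(u : E), S (S w)⟫_ℂ + ⟪B† u, C (S w)⟫_ℂ := by
          rw [hS.isPositive.inner_left_eq_inner_right y w, inner_add_left,
            hS.isPositive.inner_left_eq_inner_right (u : E) (S w),
            ContinuousLinearMap.adjoint_inner_left]
      _ = ⟪(u : E), S (S w) + B ⟨B† ⟨S (S w), h1⟩, h2⟩⟫_ℂ := by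
          rw [hCSw, inner_add_right, LinearPMap.adjoint_isFormalAdjoint hB u ⟨_, h2⟩]
      _ = ⟪(u : E), w⟫_ℂ := by rw [heq]
  obtain ⟨_, hCy⟩ := hC y
  exact ⟨y, hCy.trans (congrArg B† (Subtype.ext hSy))⟩

lemma norm_le_mul_norm_of_apply_eq (hB : Dense (B.domain : Set F))
    (hS : IsInvSqrtOneAddMulAdjoint B S) (hC : ∀ x, ∃ h : S x ∈ B†.domain, C x = B† ⟨S x, h⟩)
    (A : E →L[ℂ] F) {x : E} (h : A x ∈ B.domain) (hx : B ⟨A x, h⟩ = x) :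
    ‖x‖ ≤ (1 + ‖A‖) * ‖C x‖ := by
  have hinner : ⟪C x, A x⟫_ℂ = ⟪S x, x⟫_ℂ := by
    obtain ⟨hSx, hCx⟩ := hC x
    rw [hCx, LinearPMap.adjoint_isFormalAdjoint hB ⟨S x, hSx⟩ ⟨A x, h⟩, hx]
  have hSx : ‖S x‖ ^ 2 ≤ ‖C x‖ * (‖A‖ * ‖x‖) :=
    calc ‖S x‖ ^ 2 ≤ (⟪S x, x⟫_ℂ).re :=
          hS.isPositive.norm_apply_sq_le_re_inner (hS.opNorm_le_one hB hC) x
      _ = (⟪C x, A x⟫_ℂ).re := by rw [hinner]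
      _ ≤ ‖C x‖ * ‖A x‖ := (Complex.re_le_norm _).trans (norm_inner_le_norm _ _)
      _ ≤ ‖C x‖ * (‖A‖ * ‖x‖) := by gcongr; exact A.le_opNorm x
  have hnorm := hS.norm_sq_add_norm_sq hB hC x
  have hCx := hS.norm_apply_le hB hC x
  have hsq : ‖x‖ ^ 2 ≤ (1 + ‖A‖) * ‖C x‖ * ‖x‖ := by
    nlinarith [mul_le_mul_of_nonneg_left hCx (norm_nonneg (C x))]
  by_contra! hlt
  nlinarith [mul_nonneg (by positivity : (0 : ℝ) ≤ 1 + ‖A‖) (norm_nonneg (C x))]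

end IsInvSqrtOneAddMulAdjoint

end

lemma IsMPInverse.exists_apply_eq_of_mem_closure_range {A : H1 →L[ℂ] H2} {B : H2 →ₗ.[ℂ] H1}
    (hB : IsMPInverse A B) {x : H1} (hx : x ∈ (LinearMap.range B.toFun).topologicalClosure) :
    ∃ h : A x ∈ B.domain, B ⟨A x, h⟩ = x := by
  obtain ⟨-, -, -, -, hABA, -, -, hBA⟩ := hB
  obtain ⟨h, -⟩ := hABA x
  obtain ⟨hmem, hperp⟩ := hBA x h
  exact ⟨h, (sub_eq_zero.mp (inner_self_eq_zero.mp (hperp _ (sub_mem hx hmem)))).symm⟩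

/-- For a bounded `A` with Moore–Penrose inverse `B` and `S = (I + BB*)^{-1/2}`, the
operator `C = B*(I + BB*)^{-1/2}` is everywhere defined and bounded with closed range, there
is `c > 0` with `c‖x‖ ≤ ‖C x‖ ≤ ‖x‖` for all `x ∈ R(B)`, and `C` restricts to an
isomorphism (a bijection) from `cl R(B) = N(B*)^⊥` onto `cl R(B*)`. -/
theorem mp_sqrt_isomorphism (A : H1 →L[ℂ] H2) (B : H2 →ₗ.[ℂ] H1) (hB : IsMPInverse A B)
    (S : H1 →L[ℂ] H1) (hSpos : S.IsPositive)
    (hS : ∀ x : H1, ∃ h1 : S (S x) ∈ B.adjoint.domain,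
      ∃ h2 : B.adjoint ⟨S (S x), h1⟩ ∈ B.domain,
      S (S x) + B ⟨B.adjoint ⟨S (S x), h1⟩, h2⟩ = x) :
    ∃ C : H1 →L[ℂ] H2,
      (∀ x : H1, ∃ h : S x ∈ B.adjoint.domain, C x = B.adjoint ⟨S x, h⟩) ∧
      IsClosed (Set.range C) ∧
      (∃ c > 0, ∀ x ∈ LinearMap.range B.toFun, c * ‖x‖ ≤ ‖C x‖ ∧ ‖C x‖ ≤ ‖x‖) ∧
      C '' ((LinearMap.range B.toFun).topologicalClosure : Set H1) =
        ((LinearMap.range B.adjoint.toFun).topologicalClosure : Set H2) ∧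
      Set.InjOn C ((LinearMap.range B.toFun).topologicalClosure : Set H1) := by
  have hdense : Dense (B.domain : Set H2) := hB.2.1
  have hS' : IsInvSqrtOneAddMulAdjoint B S := ⟨hSpos, hS⟩
  obtain ⟨C, hC⟩ := hS'.exists_clm_eq_adjoint_comp hdense
  set M := (LinearMap.range B.toFun).topologicalClosure
  have hlower : ∀ x ∈ M, ‖x‖ ≤ (1 + ‖A‖) * ‖C x‖ := fun x hx => by
    obtain ⟨h, hBA⟩ := hB.exists_apply_eq_of_mem_closure_range hx
    exact hS'.norm_le_mul_norm_of_apply_eq hdense hC A h hBA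
  have himage := hS'.image_closure_range_eq_range hdense hC
  have hclosed : IsClosed (Set.range C) := himage ▸
    C.isClosed_image_of_le_mul_norm (Submodule.isClosed_topologicalClosure _)
      (c := ⟨1 + ‖A‖, by positivity⟩) hlower
  refine ⟨C, hC, hclosed,
    ⟨(1 + ‖A‖)⁻¹, by positivity, fun x hx => ⟨?_, hS'.norm_apply_le hdense hC x⟩⟩, ?_, ?_⟩
  · rw [inv_mul_le_iff₀ (by positivity)]
    exact hlower x (Submodule.le_topologicalClosure _ hx)
  · rw [himage, Submodule.topologicalClosure_coe, ← hS'.range_eq_range_adjoint hdense hC,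
      hclosed.closure_eq]
  · intro x hx y hy hxy
    have h := hlower (x - y) (sub_mem hx hy)
    rw [map_sub, hxy, sub_self, norm_zero, mul_zero, norm_le_zero_iff, sub_eq_zero] at h
    exact h
end

section
/- Let A ∈ B(H1, H2) with Moore–Penrose inverse B, and T_B = B(I + B*B)^{-1/2} + A*(I + B*B)^{-1/2}. Then T_B is the Moore–Penrose inverse of the bounded operator B*(I + BB*)^{-1/2}; in particular T_B B*(I + BB*)^{-1/2} = P_{cl R(B)} and B*(I + BB*)^{-1/2} T_B = P_{cl R(B*)}. -/
open Polynomial in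
lemma cfc_sqrt_sq_eq {H : Type*} [NormedAddCommGroup H] [InnerProductSpace ℂ H] [CompleteSpace H]
    (p : H →L[ℂ] H) (hp : p.IsPositive) : cfc Real.sqrt (p^2) = p := by
  have hsa : IsSelfAdjoint p := hp.isSelfAdjoint
  have h0 : (0:H→L[ℂ]H) ≤ p := (ContinuousLinearMap.nonneg_iff_isPositive p).mpr hp
  have h2 : p^2 = cfc (fun x : ℝ => x^2) p := by
    rw [cfc_pow_id p 2]
  rw [h2, ← cfc_comp' Real.sqrt (fun x : ℝ => x^2) p (by fun_prop)]
  calc cfc (fun x : ℝ => Real.sqrt (x^2)) p = cfc (fun x : ℝ => x) p := by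
        apply cfc_congr
        intro x hx
        have hx0 : 0 ≤ x := spectrum_nonneg_of_nonneg h0 hx
        simp [Real.sqrt_sq hx0]
    _ = p := cfc_id ℝ p

open Polynomial in
lemma sqrt_poly_approx (M : ℝ) (ε : ℝ) (hε : 0 < ε) :
    ∃ P : ℝ[X], ∀ x ∈ Set.Icc 0 M, |Real.sqrt x - P.eval x| ≤ ε := by
  set s : Set ℝ := Set.Icc 0 M
  let g : C(s, ℝ) := ⟨fun x => Real.sqrt x, by fun_prop⟩
  have hg : g ∈ closure (polynomialFunctions s : Set C(s, ℝ)) := by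
    have := polynomialFunctions.topologicalClosure s
    have : g ∈ (polynomialFunctions s).topologicalClosure := by rw [this]; trivial
    exact this
  obtain ⟨h, hmem, hdist⟩ := Metric.mem_closure_iff.mp hg ε hε
  rw [polynomialFunctions_coe] at hmem
  obtain ⟨P, rfl⟩ := hmem
  refine ⟨P, fun x hx => ?_⟩
  have := ContinuousMap.dist_apply_le_dist (f := g) (g := Polynomial.toContinuousMapOnAlgHom s P) ⟨x, hx⟩
  have h2 : dist (Real.sqrt x) (P.eval x) ≤ dist g (Polynomial.toContinuousMapOnAlgHom s P) := this
  rw [Real.dist_eq] at h2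
  exact h2.trans hdist.le

open Polynomial in
lemma key_intertwine {E F : Type*} [NormedAddCommGroup E] [InnerProductSpace ℂ E] [CompleteSpace E]
    [NormedAddCommGroup F] [InnerProductSpace ℂ F] [CompleteSpace F]
    (X : E →L[ℂ] F) (q : E →L[ℂ] E) (p : F →L[ℂ] F)
    (hq : q.IsPositive) (hp : p.IsPositive)
    (h : ∀ v, p (p (X v)) = X (q (q v))) : ∀ v, p (X v) = X (q v) := by
  have hsp : IsSelfAdjoint p := hp.isSelfAdjoint
  have hsq : IsSelfAdjoint q := hq.isSelfAdjoint
  have hsp2 : IsSelfAdjoint (p^2) := hsp.pow 2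
  have hsq2 : IsSelfAdjoint (q^2) := hsq.pow 2
  have h0p : (0:F→L[ℂ]F) ≤ p := (ContinuousLinearMap.nonneg_iff_isPositive p).mpr hp
  have h0q : (0:E→L[ℂ]E) ≤ q := (ContinuousLinearMap.nonneg_iff_isPositive q).mpr hq
  -- powers intertwine
  have hpow : ∀ (n : ℕ) (v : E), ((p^2)^n) (X v) = X (((q^2)^n) v) := by
    intro n
    induction n with
    | zero => simp
    | succ n ih =>
      intro v
      have e1 : ((p^2)^(n+1)) (X v) = ((p^2)^n) ((p^2) (X v)) := by
        rw [pow_succ]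
        simp [ContinuousLinearMap.mul_apply]
      have e2 : (p^2) (X v) = X ((q^2) v) := by
        simpa [pow_two, ContinuousLinearMap.mul_apply] using h v
      rw [e1, e2, ih]
      simp [pow_succ, ContinuousLinearMap.mul_apply]
  -- polynomials intertwine
  have hP : ∀ (P : ℝ[X]) (v : E), (aeval (p^2) P) (X v) = X ((aeval (q^2) P) v) := by
    intro P v
    rw [aeval_eq_sum_range, aeval_eq_sum_range]
    simp only [ContinuousLinearMap.coe_sum', Finset.sum_apply, ContinuousLinearMap.coe_smul',
      Pi.smul_apply, map_sum, ContinuousLinearMap.map_smul_of_tower]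
    exact Finset.sum_congr rfl fun i _ => by rw [hpow i v]
  -- epsilon argument
  intro v
  have key : ∀ ε : ℝ, 0 < ε → ‖p (X v) - X (q v)‖ ≤ (‖X v‖ + ‖X‖ * ‖v‖) * ε := by
    intro ε hε
    set M : ℝ := max (‖p^2‖ * ‖(1 : F →L[ℂ] F)‖) (‖q^2‖ * ‖(1 : E →L[ℂ] E)‖) with hM
    obtain ⟨P, hPa⟩ := sqrt_poly_approx M ε hε
    have hboundp : ‖p - aeval (p^2) P‖ ≤ ε := by
      have hnorm : ‖p - aeval (p^2) P‖ = ‖cfc (fun x : ℝ => Real.sqrt x - P.eval x) (p^2)‖ := by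
        rw [cfc_sub Real.sqrt (fun x => P.eval x) (p^2), cfc_sqrt_sq_eq p hp,
          cfc_polynomial P (p^2)]
      rw [hnorm]
      refine norm_cfc_le hε.le fun x hx => ?_
      have hx0 : 0 ≤ x := spectrum_nonneg_of_nonneg
        (by rw [pow_two]; nth_rewrite 1 [← hsp.star_eq]; exact star_mul_self_nonneg p) hx
      have hxM : x ≤ M := by
        have := spectrum.norm_le_norm_mul_of_mem hx
        calc x ≤ |x| := le_abs_self x
        _ ≤ ‖p^2‖ * ‖(1 : F →L[ℂ] F)‖ := by rwa [Real.norm_eq_abs] at this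
        _ ≤ M := le_max_left _ _
      simpa [Real.norm_eq_abs] using hPa x ⟨hx0, hxM⟩
    have hboundq : ‖q - aeval (q^2) P‖ ≤ ε := by
      have hnorm : ‖q - aeval (q^2) P‖ = ‖cfc (fun x : ℝ => Real.sqrt x - P.eval x) (q^2)‖ := by
        rw [cfc_sub Real.sqrt (fun x => P.eval x) (q^2), cfc_sqrt_sq_eq q hq,
          cfc_polynomial P (q^2)]
      rw [hnorm]
      refine norm_cfc_le hε.le fun x hx => ?_
      have hx0 : 0 ≤ x := spectrum_nonneg_of_nonneg
        (by rw [pow_two]; nth_rewrite 1 [← hsq.star_eq]; exact star_mul_self_nonneg q) hx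
      have hxM : x ≤ M := by
        have := spectrum.norm_le_norm_mul_of_mem hx
        calc x ≤ |x| := le_abs_self x
        _ ≤ ‖q^2‖ * ‖(1 : E →L[ℂ] E)‖ := by rwa [Real.norm_eq_abs] at this
        _ ≤ M := le_max_right _ _
      simpa [Real.norm_eq_abs] using hPa x ⟨hx0, hxM⟩
    have hid : p (X v) - X (q v)
        = (p - aeval (p^2) P) (X v) - X ((q - aeval (q^2) P) v) := by
      simp only [ContinuousLinearMap.sub_apply, map_sub]
      rw [hP P v]
      abel
    calc ‖p (X v) - X (q v)‖
        ≤ ‖(p - aeval (p^2) P) (X v)‖ + ‖X ((q - aeval (q^2) P) v)‖ := by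
          rw [hid]; exact norm_sub_le _ _
      _ ≤ ε * ‖X v‖ + ‖X‖ * (ε * ‖v‖) := by
          gcongr
          · exact ((p - aeval (p^2) P).le_opNorm (X v)).trans (by gcongr)
          · exact (X.le_opNorm _).trans (by
              gcongr
              exact ((q - aeval (q^2) P).le_opNorm v).trans (by gcongr))
      _ ≤ (‖X v‖ + ‖X‖ * ‖v‖) * ε := by ring_nf; nlinarith [norm_nonneg X, norm_nonneg v, norm_nonneg (X v), hε.le]
  have hz : ‖p (X v) - X (q v)‖ ≤ 0 := by
    by_contra hc
    push_neg at hc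
    set c : ℝ := ‖X v‖ + ‖X‖ * ‖v‖ with hc'
    have hc0 : 0 ≤ c := by positivity
    have := key (‖p (X v) - X (q v)‖ / (c + 1)) (by positivity)
    have hlt : c * (‖p (X v) - X (q v)‖ / (c + 1)) < ‖p (X v) - X (q v)‖ := by
      rw [div_eq_inv_mul]
      rw [show c * ((c+1)⁻¹ * ‖p (X v) - X (q v)‖) = (c / (c+1)) * ‖p (X v) - X (q v)‖ by ring]
      have h1 : c / (c+1) < 1 := by
        rw [div_lt_one (by linarith)]; linarith
      nlinarith [div_nonneg hc0 (by linarith : (0:ℝ) ≤ c + 1)]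
    linarith
  have := norm_nonneg (p (X v) - X (q v))
  have : ‖p (X v) - X (q v)‖ = 0 := le_antisymm hz this
  exact sub_eq_zero.mp (norm_eq_zero.mp this)

section AuxPMap

variable {R E' F' : Type*} [Ring R] [AddCommGroup E'] [Module R E']
  [AddCommGroup F'] [Module R F']

lemma pmap_congr (L : E' →ₗ.[R] F') {u u' : E'} (h : u = u')
    (hu : u ∈ L.domain) (hu' : u' ∈ L.domain) : L ⟨u, hu⟩ = L ⟨u', hu'⟩ := by
  subst h; rfl

lemma pmap_sub (L : E' →ₗ.[R] F') {a b : E'} (ha : a ∈ L.domain) (hb : b ∈ L.domain)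
    (hab : a - b ∈ L.domain) : L ⟨a - b, hab⟩ = L ⟨a, ha⟩ - L ⟨b, hb⟩ := by
  have h : (⟨a - b, hab⟩ : L.domain) = ⟨a, ha⟩ - ⟨b, hb⟩ := Subtype.ext (by simp)
  rw [h, L.map_sub]

lemma pmap_add (L : E' →ₗ.[R] F') {a b : E'} (ha : a ∈ L.domain) (hb : b ∈ L.domain)
    (hab : a + b ∈ L.domain) : L ⟨a + b, hab⟩ = L ⟨a, ha⟩ + L ⟨b, hb⟩ := by
  have h : (⟨a + b, hab⟩ : L.domain) = ⟨a, ha⟩ + ⟨b, hb⟩ := Subtype.ext (by simp)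
  rw [h, L.map_add]

end AuxPMap



open scoped InnerProductSpace

variable {H1 H2 : Type*}
  [NormedAddCommGroup H1] [InnerProductSpace ℂ H1] [CompleteSpace H1]
  [NormedAddCommGroup H2] [InnerProductSpace ℂ H2] [CompleteSpace H2]

set_option maxHeartbeats 2000000 in
/-- With notation as before, `T_B = B(I + B*B)^{-1/2} + A*(I + B*B)^{-1/2}` is the
Moore–Penrose inverse of the bounded operator `C = B*(I + BB*)^{-1/2}`: it satisfies
`C T_B C = C`, `T_B C T_B = T_B`, `T_B C = P_{cl R(B)}` and `C T_B = P_{cl R(B*)}`. -/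
theorem TB_is_mp_inverse (A : H1 →L[ℂ] H2) (B : H2 →ₗ.[ℂ] H1) (hB : IsMPInverse A B)
    (SB : H2 →L[ℂ] H2) (hSBpos : SB.IsPositive)
    (hSB : ∀ y : H2, ∃ h : SB (SB y) ∈ B.domain,
      ∃ h2 : B ⟨SB (SB y), h⟩ ∈ B.adjoint.domain,
      SB (SB y) + B.adjoint ⟨B ⟨SB (SB y), h⟩, h2⟩ = y)
    (S1 : H1 →L[ℂ] H1) (hS1pos : S1.IsPositive)
    (hS1 : ∀ x : H1, ∃ h1 : S1 (S1 x) ∈ B.adjoint.domain,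
      ∃ h2 : B.adjoint ⟨S1 (S1 x), h1⟩ ∈ B.domain,
      S1 (S1 x) + B ⟨B.adjoint ⟨S1 (S1 x), h1⟩, h2⟩ = x)
    (CB : H2 →L[ℂ] H1)
    (hCB : ∀ y : H2, ∃ h : SB y ∈ B.domain, CB y = B ⟨SB y, h⟩)
    (CBs : H1 →L[ℂ] H2)
    (hCBs : ∀ x : H1, ∃ h : S1 x ∈ B.adjoint.domain, CBs x = B.adjoint ⟨S1 x, h⟩) :
    (∀ x : H1, CBs ((CB + (ContinuousLinearMap.adjoint A).comp SB) (CBs x)) = CBs x) ∧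
    (∀ y : H2, (CB + (ContinuousLinearMap.adjoint A).comp SB)
        (CBs ((CB + (ContinuousLinearMap.adjoint A).comp SB) y)) =
      (CB + (ContinuousLinearMap.adjoint A).comp SB) y) ∧
    (∀ x : H1, (CB + (ContinuousLinearMap.adjoint A).comp SB) (CBs x) ∈
        (LinearMap.range B.toFun).topologicalClosure ∧
      ∀ z ∈ (LinearMap.range B.toFun).topologicalClosure,
        ⟪x - (CB + (ContinuousLinearMap.adjoint A).comp SB) (CBs x), z⟫_ℂ = 0) ∧
    (∀ y : H2, CBs ((CB + (ContinuousLinearMap.adjoint A).comp SB) y) ∈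
        (LinearMap.range B.adjoint.toFun).topologicalClosure ∧
      ∀ z ∈ (LinearMap.range B.adjoint.toFun).topologicalClosure,
        ⟪y - CBs ((CB + (ContinuousLinearMap.adjoint A).comp SB) y), z⟫_ℂ = 0) := by
  classical
  obtain ⟨-, hdense, -, -, h5, h6, h7, h8⟩ := hB
  set A' := ContinuousLinearMap.adjoint A with hA'def
  set T := CB + A'.comp SB with hTdef
  have hTapp : ∀ y : H2, T y = CB y + A' (SB y) := fun y => rfl
  -- choices
  have memA : ∀ x : H1, A x ∈ B.domain := fun x => (h5 x).choose
  have hABA : ∀ x : H1, A (B ⟨A x, memA x⟩) = A x := fun x => (h5 x).choose_spec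
  have hSBd1 : ∀ y : H2, SB (SB y) ∈ B.domain := fun y => (hSB y).choose
  have hSBd2 : ∀ y : H2, B ⟨SB (SB y), hSBd1 y⟩ ∈ B.adjoint.domain :=
    fun y => (hSB y).choose_spec.choose
  have hSBe : ∀ y : H2,
      SB (SB y) + B.adjoint ⟨B ⟨SB (SB y), hSBd1 y⟩, hSBd2 y⟩ = y :=
    fun y => (hSB y).choose_spec.choose_spec
  have hS1d1 : ∀ x : H1, S1 (S1 x) ∈ B.adjoint.domain := fun x => (hS1 x).choose
  have hS1d2 : ∀ x : H1, B.adjoint ⟨S1 (S1 x), hS1d1 x⟩ ∈ B.domain :=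
    fun x => (hS1 x).choose_spec.choose
  have hS1e : ∀ x : H1,
      S1 (S1 x) + B ⟨B.adjoint ⟨S1 (S1 x), hS1d1 x⟩, hS1d2 x⟩ = x :=
    fun x => (hS1 x).choose_spec.choose_spec
  have hCBd : ∀ y : H2, SB y ∈ B.domain := fun y => (hCB y).choose
  have hCBe : ∀ y : H2, CB y = B ⟨SB y, hCBd y⟩ := fun y => (hCB y).choose_spec
  have hCBsd : ∀ x : H1, S1 x ∈ B.adjoint.domain := fun x => (hCBs x).choose
  have hCBse : ∀ x : H1, CBs x = B.adjoint ⟨S1 x, hCBsd x⟩ := fun x => (hCBs x).choose_spec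
  -- the fundamental pairing
  have pair : ∀ (w : B.adjoint.domain) (z : B.domain),
      ⟪B.adjoint w, (z : H2)⟫_ℂ = ⟪(w : H1), B z⟫_ℂ :=
    fun w z => LinearPMap.adjoint_isFormalAdjoint hdense w z
  -- injectivity of I + B B† on H1
  have inj1 : ∀ (u : H1) (hu : u ∈ B.adjoint.domain)
      (hbu : B.adjoint ⟨u, hu⟩ ∈ B.domain),
      u + B ⟨B.adjoint ⟨u, hu⟩, hbu⟩ = 0 → u = 0 := by
    intro u hu hbu h0
    have hinner : ⟪u, u + B ⟨B.adjoint ⟨u, hu⟩, hbu⟩⟫_ℂ = 0 := by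
      rw [h0]; exact inner_zero_right u
    rw [inner_add_right] at hinner
    have hp : ⟪u, B ⟨B.adjoint ⟨u, hu⟩, hbu⟩⟫_ℂ
        = ⟪B.adjoint ⟨u, hu⟩, B.adjoint ⟨u, hu⟩⟫_ℂ := (pair ⟨u, hu⟩ ⟨_, hbu⟩).symm
    rw [hp, inner_self_eq_norm_sq_to_K, inner_self_eq_norm_sq_to_K] at hinner
    have hrc : ((‖u‖ ^ 2 + ‖B.adjoint ⟨u, hu⟩‖ ^ 2 : ℝ) : ℂ) = 0 := by
      push_cast; exact hinner
    have hr : (‖u‖ : ℝ) ^ 2 + ‖B.adjoint ⟨u, hu⟩‖ ^ 2 = 0 := by exact_mod_cast hrc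
    have : ‖u‖ = 0 := by nlinarith [sq_nonneg ‖B.adjoint ⟨u, hu⟩‖, norm_nonneg u]
    exact norm_eq_zero.mp this
  -- injectivity of I + B† B on H2
  have inj2 : ∀ (v : H2) (hv : v ∈ B.domain)
      (hbv : B ⟨v, hv⟩ ∈ B.adjoint.domain),
      v + B.adjoint ⟨B ⟨v, hv⟩, hbv⟩ = 0 → v = 0 := by
    intro v hv hbv h0
    have hinner : ⟪v + B.adjoint ⟨B ⟨v, hv⟩, hbv⟩, v⟫_ℂ = 0 := by
      rw [h0]; exact inner_zero_left v
    rw [inner_add_left] at hinner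
    have hp : ⟪B.adjoint ⟨B ⟨v, hv⟩, hbv⟩, v⟫_ℂ = ⟪B ⟨v, hv⟩, B ⟨v, hv⟩⟫_ℂ :=
      pair ⟨_, hbv⟩ ⟨v, hv⟩
    rw [hp, inner_self_eq_norm_sq_to_K, inner_self_eq_norm_sq_to_K] at hinner
    have hrc : ((‖v‖ ^ 2 + ‖B ⟨v, hv⟩‖ ^ 2 : ℝ) : ℂ) = 0 := by
      push_cast; exact hinner
    have hr : (‖v‖ : ℝ) ^ 2 + ‖B ⟨v, hv⟩‖ ^ 2 = 0 := by exact_mod_cast hrc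
    have : ‖v‖ = 0 := by nlinarith [sq_nonneg ‖B ⟨v, hv⟩‖, norm_nonneg v]
    exact norm_eq_zero.mp this
  -- symmetry of A ∘ B on B.domain
  have ABsym : ∀ v w : B.domain, ⟪(v : H2), A (B w)⟫_ℂ = ⟪A (B v), (w : H2)⟫_ℂ := by
    intro v w
    have e1 : ⟪(v : H2) - A (B v), A (B w)⟫_ℂ = 0 := (h7 v).2 _ (h7 w).1
    have e2 : ⟪(w : H2) - A (B w), A (B v)⟫_ℂ = 0 := (h7 w).2 _ (h7 v).1
    rw [inner_sub_left, sub_eq_zero] at e1 e2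
    calc ⟪(v : H2), A (B w)⟫_ℂ = ⟪A (B v), A (B w)⟫_ℂ := e1
      _ = (starRingEnd ℂ) ⟪A (B w), A (B v)⟫_ℂ := (inner_conj_symm _ _).symm
      _ = (starRingEnd ℂ) ⟪(w : H2), A (B v)⟫_ℂ := by rw [← e2]
      _ = ⟪A (B v), (w : H2)⟫_ℂ := inner_conj_symm _ _
  -- symmetry of B ∘ A on H1
  have BAsym : ∀ v w : H1,
      ⟪v, B ⟨A w, memA w⟩⟫_ℂ = ⟪B ⟨A v, memA v⟩, w⟫_ℂ := by
    intro v w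
    have e1 : ⟪v - B ⟨A v, memA v⟩, B ⟨A w, memA w⟩⟫_ℂ = 0 :=
      (h8 v (memA v)).2 _ (h8 w (memA w)).1
    have e2 : ⟪w - B ⟨A w, memA w⟩, B ⟨A v, memA v⟩⟫_ℂ = 0 :=
      (h8 w (memA w)).2 _ (h8 v (memA v)).1
    rw [inner_sub_left, sub_eq_zero] at e1 e2
    calc ⟪v, B ⟨A w, memA w⟩⟫_ℂ = ⟪B ⟨A v, memA v⟩, B ⟨A w, memA w⟩⟫_ℂ := e1
      _ = (starRingEnd ℂ) ⟪B ⟨A w, memA w⟩, B ⟨A v, memA v⟩⟫_ℂ := (inner_conj_symm _ _).symm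
      _ = (starRingEnd ℂ) ⟪w, B ⟨A v, memA v⟩⟫_ℂ := by rw [← e2]
      _ = ⟪B ⟨A v, memA v⟩, w⟫_ℂ := inner_conj_symm _ _
  -- A' maps B-domain elements into the adjoint domain, with B†(A' v) = A (B v)
  have mem9 : ∀ v : B.domain, A' (v : H2) ∈ B.adjoint.domain := by
    intro v
    apply LinearPMap.mem_adjoint_domain_of_exists
    refine ⟨A (B v), fun z => ?_⟩
    rw [hA'def, ContinuousLinearMap.adjoint_inner_left]
    exact (ABsym v z).symm
  have val9 : ∀ v : B.domain, B.adjoint ⟨A' (v : H2), mem9 v⟩ = A (B v) := by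
    intro v
    refine LinearPMap.adjoint_apply_eq hdense _ fun z => ?_
    show ⟪A (B v), (z : H2)⟫_ℂ = ⟪A' (v : H2), B z⟫_ℂ
    rw [hA'def, ContinuousLinearMap.adjoint_inner_left]
    exact (ABsym v z).symm
  -- A' ∘ B† = B ∘ A on the adjoint domain
  have val10 : ∀ w : B.adjoint.domain,
      A' (B.adjoint w) = B ⟨A (w : H1), memA _⟩ := by
    intro w
    apply ext_inner_right ℂ
    intro z
    rw [hA'def, ContinuousLinearMap.adjoint_inner_left]
    rw [show ⟪B.adjoint w, A z⟫_ℂ = ⟪(w : H1), B ⟨A z, memA z⟩⟫_ℂ from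
      pair w ⟨A z, memA z⟩]
    exact BAsym w z
  -- squared intertwining relations
  have L2 : ∀ (w : H2) (hw : w ∈ B.domain),
      S1 (S1 (B ⟨w, hw⟩)) = B ⟨SB (SB w), hSBd1 w⟩ := by
    intro w hw
    set a := S1 (S1 (B ⟨w, hw⟩)) with ha
    set b := B ⟨SB (SB w), hSBd1 w⟩ with hb
    have hau : a ∈ B.adjoint.domain := hS1d1 _
    have hbu : b ∈ B.adjoint.domain := hSBd2 w
    have hu : a - b ∈ B.adjoint.domain := sub_mem hau hbu
    have hBbEq : B.adjoint ⟨b, hbu⟩ = w - SB (SB w) := eq_sub_of_add_eq' (hSBe w)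
    have hBaEq : B ⟨B.adjoint ⟨a, hau⟩, hS1d2 _⟩ = B ⟨w, hw⟩ - a :=
      eq_sub_of_add_eq' (hS1e (B ⟨w, hw⟩))
    have hBu : B.adjoint ⟨a - b, hu⟩ = B.adjoint ⟨a, hau⟩ - (w - SB (SB w)) := by
      rw [pmap_sub B.adjoint hau hbu hu, hBbEq]
    have hBud : B.adjoint ⟨a - b, hu⟩ ∈ B.domain := by
      rw [hBu]; exact sub_mem (hS1d2 _) (sub_mem hw (hSBd1 w))
    have key : (a - b) + B ⟨B.adjoint ⟨a - b, hu⟩, hBud⟩ = 0 := by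
      have e : B ⟨B.adjoint ⟨a - b, hu⟩, hBud⟩
          = B ⟨B.adjoint ⟨a, hau⟩ - (w - SB (SB w)), hBu ▸ hBud⟩ :=
        pmap_congr B hBu _ _
      rw [e, pmap_sub B (hS1d2 _) (sub_mem hw (hSBd1 w)) _, hBaEq,
        pmap_sub B hw (hSBd1 w) _]
      simp only [← hb]
      abel
    have := inj1 (a - b) hu hBud key
    exact sub_eq_zero.mp this
  have L2' : ∀ (w : H1) (hw : w ∈ B.adjoint.domain),
      SB (SB (B.adjoint ⟨w, hw⟩)) = B.adjoint ⟨S1 (S1 w), hS1d1 w⟩ := by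
    intro w hw
    set a := SB (SB (B.adjoint ⟨w, hw⟩)) with ha
    set b := B.adjoint ⟨S1 (S1 w), hS1d1 w⟩ with hb
    have hau : a ∈ B.domain := hSBd1 _
    have hbu : b ∈ B.domain := hS1d2 w
    have hu : a - b ∈ B.domain := sub_mem hau hbu
    have hBbEq : B ⟨b, hbu⟩ = w - S1 (S1 w) := eq_sub_of_add_eq' (hS1e w)
    have hBaEq : B.adjoint ⟨B ⟨a, hau⟩, hSBd2 _⟩ = B.adjoint ⟨w, hw⟩ - a :=
      eq_sub_of_add_eq' (hSBe (B.adjoint ⟨w, hw⟩))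
    have hBu : B ⟨a - b, hu⟩ = B ⟨a, hau⟩ - (w - S1 (S1 w)) := by
      rw [pmap_sub B hau hbu hu, hBbEq]
    have hBud : B ⟨a - b, hu⟩ ∈ B.adjoint.domain := by
      rw [hBu]; exact sub_mem (hSBd2 _) (sub_mem hw (hS1d1 w))
    have key : (a - b) + B.adjoint ⟨B ⟨a - b, hu⟩, hBud⟩ = 0 := by
      have e : B.adjoint ⟨B ⟨a - b, hu⟩, hBud⟩
          = B.adjoint ⟨B ⟨a, hau⟩ - (w - S1 (S1 w)), hBu ▸ hBud⟩ :=
        pmap_congr B.adjoint hBu _ _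
      rw [e, pmap_sub B.adjoint (hSBd2 _) (sub_mem hw (hS1d1 w)) _, hBaEq,
        pmap_sub B.adjoint hw (hS1d1 w) _]
      simp only [← hb]
      abel
    have := inj2 (a - b) hu hBud key
    exact sub_eq_zero.mp this
  have L3sq : ∀ v : H2, S1 (S1 (A' v)) = A' (SB (SB v)) := by
    intro v
    set a := S1 (S1 (A' v)) with ha
    set b := A' (SB (SB v)) with hb
    have hau : a ∈ B.adjoint.domain := hS1d1 _
    have hbu : b ∈ B.adjoint.domain := mem9 ⟨SB (SB v), hSBd1 v⟩
    have hu : a - b ∈ B.adjoint.domain := sub_mem hau hbu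
    have hBbEq : B.adjoint ⟨b, hbu⟩ = A (B ⟨SB (SB v), hSBd1 v⟩) :=
      val9 ⟨SB (SB v), hSBd1 v⟩
    have hBaEq : B ⟨B.adjoint ⟨a, hau⟩, hS1d2 _⟩ = A' v - a :=
      eq_sub_of_add_eq' (hS1e (A' v))
    have hBu : B.adjoint ⟨a - b, hu⟩
        = B.adjoint ⟨a, hau⟩ - A (B ⟨SB (SB v), hSBd1 v⟩) := by
      rw [pmap_sub B.adjoint hau hbu hu, hBbEq]
    have hBud : B.adjoint ⟨a - b, hu⟩ ∈ B.domain := by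
      rw [hBu]; exact sub_mem (hS1d2 _) (memA _)
    have hv' : A' v = b + B ⟨A (B ⟨SB (SB v), hSBd1 v⟩), memA _⟩ := by
      have h0 := hSBe v
      have := congrArg A' h0
      rw [map_add] at this
      rw [← this, hb]
      congr 1
      exact val10 ⟨B ⟨SB (SB v), hSBd1 v⟩, hSBd2 v⟩
    have key : (a - b) + B ⟨B.adjoint ⟨a - b, hu⟩, hBud⟩ = 0 := by
      have e : B ⟨B.adjoint ⟨a - b, hu⟩, hBud⟩
          = B ⟨B.adjoint ⟨a, hau⟩ - A (B ⟨SB (SB v), hSBd1 v⟩), hBu ▸ hBud⟩ :=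
        pmap_congr B hBu _ _
      rw [e, pmap_sub B (hS1d2 _) (memA _) _, hBaEq, hv']
      abel
    have := inj1 (a - b) hu hBud key
    exact sub_eq_zero.mp this
  -- square root intertwining via the key lemma
  have iCBs : ∀ x : H1, SB (CBs x) = CBs (S1 x) := by
    refine key_intertwine CBs S1 SB hS1pos hSBpos fun v => ?_
    rw [hCBse v, hCBse (S1 (S1 v))]
    exact L2' (S1 v) (hCBsd v)
  have iCB : ∀ y : H2, S1 (CB y) = CB (SB y) := by
    refine key_intertwine CB SB S1 hSBpos hS1pos fun v => ?_
    rw [hCBe v, hCBe (SB (SB v))]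
    exact L2 (SB v) (hCBd v)
  have iA : ∀ v : H2, S1 (A' v) = A' (SB v) :=
    key_intertwine A' SB S1 hSBpos hS1pos L3sq
  -- explicit formula for T (CBs x)
  have hT3 : ∀ x : H1,
      T (CBs x) = (x - S1 (S1 x)) + B ⟨A (S1 (S1 x)), memA _⟩ := by
    intro x
    have e1 : SB (CBs x) = B.adjoint ⟨S1 (S1 x), hS1d1 x⟩ := by
      rw [iCBs x, hCBse (S1 x)]
    have e2 : CB (CBs x) = x - S1 (S1 x) := by
      rw [hCBe (CBs x), pmap_congr B e1 (hCBd (CBs x)) (hS1d2 x)]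
      exact eq_sub_of_add_eq' (hS1e x)
    have e3 : A' (SB (CBs x)) = B ⟨A (S1 (S1 x)), memA _⟩ := by
      rw [e1]
      exact val10 ⟨S1 (S1 x), hS1d1 x⟩
    rw [hTapp (CBs x), e2, e3]
  -- goal 3
  have goal3 : ∀ x : H1, T (CBs x) ∈ (LinearMap.range B.toFun).topologicalClosure ∧
      ∀ z ∈ (LinearMap.range B.toFun).topologicalClosure,
        ⟪x - T (CBs x), z⟫_ℂ = 0 := by
    intro x
    constructor
    · rw [hT3 x]
      apply Submodule.add_mem
      · have : x - S1 (S1 x) = B ⟨B.adjoint ⟨S1 (S1 x), hS1d1 x⟩, hS1d2 x⟩ :=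
          (eq_sub_of_add_eq' (hS1e x)).symm
        rw [this]
        exact Submodule.le_topologicalClosure _ (LinearMap.mem_range_self _ _)
      · exact Submodule.le_topologicalClosure _ (LinearMap.mem_range_self _ _)
    · intro z hz
      have hxT : x - T (CBs x) = S1 (S1 x) - B ⟨A (S1 (S1 x)), memA _⟩ := by
        rw [hT3 x]; abel
      rw [hxT]
      exact (h8 (S1 (S1 x)) (memA _)).2 z hz
  -- explicit formula for CBs (T y)
  have hT4 : ∀ y : H2,
      CBs (T y) = (y - SB (SB y)) + A (B ⟨SB (SB y), hSBd1 y⟩) := by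
    intro y
    have eS : S1 (T y) = B ⟨SB (SB y), hSBd1 y⟩ + A' (SB (SB y)) := by
      rw [hTapp y, map_add, iCB y, iA (SB y), hCBe (SB y)]
    have m2 : A' (SB (SB y)) ∈ B.adjoint.domain := mem9 ⟨SB (SB y), hSBd1 y⟩
    have msum : B ⟨SB (SB y), hSBd1 y⟩ + A' (SB (SB y)) ∈ B.adjoint.domain :=
      add_mem (hSBd2 y) m2
    calc CBs (T y) = B.adjoint ⟨S1 (T y), hCBsd (T y)⟩ := hCBse (T y)
      _ = B.adjoint ⟨B ⟨SB (SB y), hSBd1 y⟩ + A' (SB (SB y)), msum⟩ :=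
          pmap_congr B.adjoint eS _ _
      _ = B.adjoint ⟨B ⟨SB (SB y), hSBd1 y⟩, hSBd2 y⟩
          + B.adjoint ⟨A' (SB (SB y)), m2⟩ := pmap_add B.adjoint _ _ _
      _ = (y - SB (SB y)) + A (B ⟨SB (SB y), hSBd1 y⟩) := by
          rw [eq_sub_of_add_eq' (hSBe y), val9 ⟨SB (SB y), hSBd1 y⟩]
  -- goal 4
  have goal4 : ∀ y : H2,
      CBs (T y) ∈ (LinearMap.range B.adjoint.toFun).topologicalClosure ∧
      ∀ z ∈ (LinearMap.range B.adjoint.toFun).topologicalClosure,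
        ⟪y - CBs (T y), z⟫_ℂ = 0 := by
    intro y
    constructor
    · rw [hCBse (T y)]
      exact Submodule.le_topologicalClosure _ (LinearMap.mem_range_self _ _)
    · intro z hz
      have hyv : y - CBs (T y) = SB (SB y) - A (B ⟨SB (SB y), hSBd1 y⟩) := by
        rw [hT4 y]; abel
      have hvmem : SB (SB y) - A (B ⟨SB (SB y), hSBd1 y⟩) ∈ B.domain :=
        sub_mem (hSBd1 y) (memA _)
      have hBv : B ⟨SB (SB y) - A (B ⟨SB (SB y), hSBd1 y⟩), hvmem⟩ = 0 := by
        rw [pmap_sub B (hSBd1 y) (memA _) hvmem]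
        obtain ⟨hh, he⟩ := h6 ⟨SB (SB y), hSBd1 y⟩
        rw [show B ⟨A (B ⟨SB (SB y), hSBd1 y⟩), memA _⟩
            = B ⟨A (B ⟨SB (SB y), hSBd1 y⟩), hh⟩ from rfl, he]
        exact sub_self _
      have hle : LinearMap.range B.adjoint.toFun
          ≤ (ℂ ∙ (SB (SB y) - A (B ⟨SB (SB y), hSBd1 y⟩)))ᗮ := by
        rintro _ ⟨w, rfl⟩
        rw [Submodule.mem_orthogonal_singleton_iff_inner_right]
        calc ⟪SB (SB y) - A (B ⟨SB (SB y), hSBd1 y⟩), B.adjoint w⟫_ℂ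
            = (starRingEnd ℂ) ⟪B.adjoint w, SB (SB y) - A (B ⟨SB (SB y), hSBd1 y⟩)⟫_ℂ :=
              (inner_conj_symm _ _).symm
          _ = (starRingEnd ℂ) ⟪(w : H1), B ⟨SB (SB y) - A (B ⟨SB (SB y), hSBd1 y⟩), hvmem⟩⟫_ℂ := by
              rw [pair w ⟨_, hvmem⟩]
          _ = 0 := by rw [hBv, inner_zero_right, map_zero]
      have hcl : (LinearMap.range B.adjoint.toFun).topologicalClosure
          ≤ (ℂ ∙ (SB (SB y) - A (B ⟨SB (SB y), hSBd1 y⟩)))ᗮ :=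
        Submodule.topologicalClosure_minimal _ hle (Submodule.isClosed_orthogonal _)
      rw [hyv]
      exact Submodule.mem_orthogonal_singleton_iff_inner_right.mp (hcl hz)
  -- range of A' lies in the closure of the range of B
  have rangeA'cl : ∀ v : H2, A' v ∈ (LinearMap.range B.toFun).topologicalClosure := by
    intro v
    rw [← Submodule.orthogonal_orthogonal_eq_closure]
    rw [Submodule.mem_orthogonal]
    intro u hu
    have hAu : A u = 0 := by
      have hg1 : ⟪u - B ⟨A u, memA u⟩, B ⟨A u, memA u⟩⟫_ℂ = 0 :=
        (h8 u (memA u)).2 _ (Submodule.le_topologicalClosure _ (LinearMap.mem_range_self _ _))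
      have hg2 : ⟪B ⟨A u, memA u⟩, u⟫_ℂ = 0 := by
        rw [Submodule.mem_orthogonal] at hu
        exact hu _ (LinearMap.mem_range_self _ _)
      have hg3 : ⟪u, B ⟨A u, memA u⟩⟫_ℂ = 0 := by
        rw [← inner_conj_symm, hg2, map_zero]
      rw [inner_sub_left, hg3, zero_sub, neg_eq_zero] at hg1
      have hg : B ⟨A u, memA u⟩ = 0 := inner_self_eq_zero.mp hg1
      calc A u = A (B ⟨A u, memA u⟩) := (hABA u).symm
        _ = A 0 := by rw [hg]
        _ = 0 := map_zero A
    rw [← inner_conj_symm, hA'def, ContinuousLinearMap.adjoint_inner_left, hAu,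
      inner_zero_right, map_zero]
  -- goal 2
  have goal2 : ∀ y : H2, T (CBs (T y)) = T y := by
    intro y
    have hTin : T y ∈ (LinearMap.range B.toFun).topologicalClosure := by
      rw [hTapp y]
      apply Submodule.add_mem
      · rw [hCBe y]
        exact Submodule.le_topologicalClosure _ (LinearMap.mem_range_self _ _)
      · exact rangeA'cl (SB y)
    obtain ⟨hm, ho⟩ := goal3 (T y)
    have hd : T y - T (CBs (T y)) ∈ (LinearMap.range B.toFun).topologicalClosure :=
      Submodule.sub_mem _ hTin hm
    have h0 : ⟪T y - T (CBs (T y)), T y - T (CBs (T y))⟫_ℂ = 0 := ho _ hd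
    exact (sub_eq_zero.mp (inner_self_eq_zero.mp h0)).symm
  -- goal 1
  have goal1 : ∀ x : H1, CBs (T (CBs x)) = CBs x := by
    intro x
    obtain ⟨hm, ho⟩ := goal4 (CBs x)
    have hin : CBs x ∈ (LinearMap.range B.adjoint.toFun).topologicalClosure := by
      rw [hCBse x]
      exact Submodule.le_topologicalClosure _ (LinearMap.mem_range_self _ _)
    have hd : CBs x - CBs (T (CBs x)) ∈
        (LinearMap.range B.adjoint.toFun).topologicalClosure :=
      Submodule.sub_mem _ hin hm
    have h0 : ⟪CBs x - CBs (T (CBs x)), CBs x - CBs (T (CBs x))⟫_ℂ = 0 := ho _ hd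
    exact (sub_eq_zero.mp (inner_self_eq_zero.mp h0)).symm
  exact ⟨goal1, goal2, goal3, goal4⟩
end

section
/- Let (x_k) be a sequence in a Hilbert space H which is (i) complete, (ii) a Bessel sequence, and which (iii) admits a complete biorthogonal sequence (y_k) that is also a Bessel sequence. Then (x_k) is a Riesz basis for H, i.e. there exists an orthonormal basis (w_k) of H and a continuous linear isomorphism U of H with x_k = U w_k for all k. -/
open scoped InnerProductSpace

variable {H : Type*} [NormedAddCommGroup H] [InnerProductSpace ℂ H] [CompleteSpace H]

lemma bessel_finset_bound (x : ℕ → H) {b : ℝ} (hb : 0 < b)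
    (hbx : ∀ v : H, Summable (fun k => ‖⟪v, x k⟫_ℂ‖ ^ 2) ∧
      ∑' k, ‖⟪v, x k⟫_ℂ‖ ^ 2 ≤ b * ‖v‖ ^ 2)
    (c : ℕ → ℂ) (F : Finset ℕ) :
    ‖∑ k ∈ F, c k • x k‖ ≤ Real.sqrt b * Real.sqrt (∑ k ∈ F, ‖c k‖ ^ 2) := by
  set u := ∑ k ∈ F, c k • x k with hu
  have hcn : (0:ℝ) ≤ ∑ k ∈ F, ‖c k‖ ^ 2 := Finset.sum_nonneg fun k _ => sq_nonneg _
  have key : ‖u‖ ^ 2 ≤ (Real.sqrt b * Real.sqrt (∑ k ∈ F, ‖c k‖ ^ 2)) * ‖u‖ := by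
    have h1 : (⟪u, u⟫_ℂ : ℂ) = ∑ k ∈ F, c k * ⟪u, x k⟫_ℂ := by
      rw [hu, inner_sum]
      exact Finset.sum_congr rfl fun k _ => inner_smul_right _ _ _
    have h2 : ‖u‖ ^ 2 ≤ ∑ k ∈ F, ‖c k‖ * ‖⟪u, x k⟫_ℂ‖ := by
      have e1 : ‖(⟪u, u⟫_ℂ : ℂ)‖ = ‖u‖ ^ 2 := by
        rw [inner_self_eq_norm_sq_to_K]
        simp
      calc ‖u‖ ^ 2 = ‖(⟪u, u⟫_ℂ : ℂ)‖ := e1.symm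
        _ = ‖∑ k ∈ F, c k * ⟪u, x k⟫_ℂ‖ := by rw [h1]
        _ ≤ ∑ k ∈ F, ‖c k * ⟪u, x k⟫_ℂ‖ := norm_sum_le _ _
        _ = ∑ k ∈ F, ‖c k‖ * ‖⟪u, x k⟫_ℂ‖ := by simp [norm_mul]
    have hCS : (∑ k ∈ F, ‖c k‖ * ‖⟪u, x k⟫_ℂ‖) ^ 2 ≤
        (∑ k ∈ F, ‖c k‖ ^ 2) * (∑ k ∈ F, ‖⟪u, x k⟫_ℂ‖ ^ 2) :=
      Finset.sum_mul_sq_le_sq_mul_sq F _ _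
    have hbess : ∑ k ∈ F, ‖⟪u, x k⟫_ℂ‖ ^ 2 ≤ b * ‖u‖ ^ 2 :=
      le_trans (Summable.sum_le_tsum F (fun k _ => sq_nonneg _) (hbx u).1) (hbx u).2
    have h3 : (∑ k ∈ F, ‖c k‖ * ‖⟪u, x k⟫_ℂ‖) ^ 2 ≤
        ((Real.sqrt b * Real.sqrt (∑ k ∈ F, ‖c k‖ ^ 2)) * ‖u‖) ^ 2 := by
      calc (∑ k ∈ F, ‖c k‖ * ‖⟪u, x k⟫_ℂ‖) ^ 2
          ≤ (∑ k ∈ F, ‖c k‖ ^ 2) * (b * ‖u‖ ^ 2) :=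
            le_trans hCS (by
              exact mul_le_mul_of_nonneg_left hbess hcn)
        _ = ((Real.sqrt b * Real.sqrt (∑ k ∈ F, ‖c k‖ ^ 2)) * ‖u‖) ^ 2 := by
            rw [mul_pow, mul_pow, Real.sq_sqrt hb.le, Real.sq_sqrt hcn]; ring
    have h4 : ∑ k ∈ F, ‖c k‖ * ‖⟪u, x k⟫_ℂ‖ ≤
        (Real.sqrt b * Real.sqrt (∑ k ∈ F, ‖c k‖ ^ 2)) * ‖u‖ := by
      have hA : (0:ℝ) ≤ ∑ k ∈ F, ‖c k‖ * ‖⟪u, x k⟫_ℂ‖ :=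
        Finset.sum_nonneg fun k _ => mul_nonneg (norm_nonneg _) (norm_nonneg _)
      have hr : (0:ℝ) ≤ (Real.sqrt b * Real.sqrt (∑ k ∈ F, ‖c k‖ ^ 2)) * ‖u‖ :=
        mul_nonneg (mul_nonneg (Real.sqrt_nonneg _) (Real.sqrt_nonneg _)) (norm_nonneg _)
      have := Real.sqrt_le_sqrt h3
      rwa [Real.sqrt_sq hA, Real.sqrt_sq hr] at this
    exact h2.trans h4
  rcases eq_or_lt_of_le (norm_nonneg u) with h0 | h0
  · rw [← h0]
    exact mul_nonneg (Real.sqrt_nonneg _) (Real.sqrt_nonneg _)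
  · have h5 : ‖u‖ * ‖u‖ ≤ (Real.sqrt b * Real.sqrt (∑ k ∈ F, ‖c k‖ ^ 2)) * ‖u‖ := by
      rw [← pow_two]; exact key
    exact le_of_mul_le_mul_right h5 h0

open scoped ENNReal

lemma lp_sq_summable (c : lp (fun _ : ℕ => ℂ) 2) : Summable (fun k => ‖c k‖ ^ 2) := by
  have h := lp.memℓp c
  have := h.summable (p := 2) (by norm_num)
  simpa [ENNReal.toReal_ofNat, Real.rpow_natCast] using this

lemma bessel_summable (x : ℕ → H) {b : ℝ} (hb : 0 < b)
    (hbx : ∀ v : H, Summable (fun k => ‖⟪v, x k⟫_ℂ‖ ^ 2) ∧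
      ∑' k, ‖⟪v, x k⟫_ℂ‖ ^ 2 ≤ b * ‖v‖ ^ 2)
    (c : lp (fun _ : ℕ => ℂ) 2) : Summable (fun k => c k • x k) := by
  rw [summable_iff_vanishing]
  intro e he
  rcases Metric.mem_nhds_iff.1 he with ⟨ε, hε, hball⟩
  have hsq : Summable (fun k => ‖c k‖ ^ 2) := lp_sq_summable c
  have := (summable_iff_vanishing.1 hsq) (Metric.ball 0 ((ε / (Real.sqrt b + 1)) ^ 2))
    (Metric.ball_mem_nhds 0 (by positivity))
  rcases this with ⟨s, hs⟩
  refine ⟨s, fun t ht => ?_⟩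
  apply hball
  rw [Metric.mem_ball, dist_zero_right]
  have hb1 : ‖∑ k ∈ t, c k • x k‖ ≤ Real.sqrt b * Real.sqrt (∑ k ∈ t, ‖c k‖ ^ 2) :=
    bessel_finset_bound x hb hbx _ t
  have h2 := hs t ht
  rw [Metric.mem_ball, dist_zero_right, Real.norm_eq_abs] at h2
  have h3 : ∑ k ∈ t, ‖c k‖ ^ 2 < (ε / (Real.sqrt b + 1)) ^ 2 := lt_of_abs_lt h2
  have h4 : Real.sqrt (∑ k ∈ t, ‖c k‖ ^ 2) < ε / (Real.sqrt b + 1) := by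
    have := Real.sqrt_lt_sqrt (Finset.sum_nonneg fun k _ => sq_nonneg _) h3
    rwa [Real.sqrt_sq (by positivity)] at this
  calc ‖∑ k ∈ t, c k • x k‖ ≤ Real.sqrt b * Real.sqrt (∑ k ∈ t, ‖c k‖ ^ 2) := hb1
    _ ≤ (Real.sqrt b + 1) * Real.sqrt (∑ k ∈ t, ‖c k‖ ^ 2) := by
        have := Real.sqrt_nonneg (∑ k ∈ t, ‖c k‖ ^ 2)
        nlinarith [Real.sqrt_nonneg b]
    _ < (Real.sqrt b + 1) * (ε / (Real.sqrt b + 1)) := by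
        apply mul_lt_mul_of_pos_left h4
        positivity
    _ = ε := by field_simp

lemma bessel_tsum_bound (x : ℕ → H) {b : ℝ} (hb : 0 < b)
    (hbx : ∀ v : H, Summable (fun k => ‖⟪v, x k⟫_ℂ‖ ^ 2) ∧
      ∑' k, ‖⟪v, x k⟫_ℂ‖ ^ 2 ≤ b * ‖v‖ ^ 2)
    (c : lp (fun _ : ℕ => ℂ) 2) : ‖∑' k, c k • x k‖ ≤ Real.sqrt b * ‖c‖ := by
  have hsum := bessel_summable x hb hbx c
  have hs : HasSum (fun k => c k • x k) (∑' k, c k • x k) := hsum.hasSum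
  refine le_of_tendsto (Filter.Tendsto.norm hs) (Filter.Eventually.of_forall fun s => ?_)
  refine (bessel_finset_bound x hb hbx _ s).trans ?_
  have h1 : ∑ k ∈ s, ‖c k‖ ^ 2 ≤ ‖c‖ ^ 2 := by
    have := lp.sum_rpow_le_norm_rpow (p := 2) (by norm_num) c s
    simpa [ENNReal.toReal_ofNat, Real.rpow_natCast] using this
  have h2 : Real.sqrt (∑ k ∈ s, ‖c k‖ ^ 2) ≤ ‖c‖ := by
    have := Real.sqrt_le_sqrt h1
    rwa [Real.sqrt_sq (norm_nonneg _)] at this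
  exact mul_le_mul_of_nonneg_left h2 (Real.sqrt_nonneg _)

noncomputable def synthesisCLM (x : ℕ → H) {b : ℝ} (hb : 0 < b)
    (hbx : ∀ v : H, Summable (fun k => ‖⟪v, x k⟫_ℂ‖ ^ 2) ∧
      ∑' k, ‖⟪v, x k⟫_ℂ‖ ^ 2 ≤ b * ‖v‖ ^ 2) : lp (fun _ : ℕ => ℂ) 2 →L[ℂ] H :=
  LinearMap.mkContinuous
    { toFun := fun c => ∑' k, c k • x k
      map_add' := fun c d => by
        rw [← Summable.tsum_add (bessel_summable x hb hbx c) (bessel_summable x hb hbx d)]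
        exact tsum_congr fun k => by
          simp [add_smul]
      map_smul' := fun a c => by
        show (∑' k, ((a • c) k) • x k) = a • ∑' k, c k • x k
        rw [← tsum_const_smul'' a]
        exact tsum_congr fun k => by
          simp [smul_smul] }
    (Real.sqrt b) (fun c => bessel_tsum_bound x hb hbx c)

@[simp] lemma synthesisCLM_apply (x : ℕ → H) {b : ℝ} (hb : 0 < b)
    (hbx : ∀ v : H, Summable (fun k => ‖⟪v, x k⟫_ℂ‖ ^ 2) ∧
      ∑' k, ‖⟪v, x k⟫_ℂ‖ ^ 2 ≤ b * ‖v‖ ^ 2) (c : lp (fun _ : ℕ => ℂ) 2) :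
    synthesisCLM x hb hbx c = ∑' k, c k • x k := rfl

lemma analysis_memℓp (y : ℕ → H) {b : ℝ}
    (hby : ∀ v : H, Summable (fun k => ‖⟪v, y k⟫_ℂ‖ ^ 2) ∧
      ∑' k, ‖⟪v, y k⟫_ℂ‖ ^ 2 ≤ b * ‖v‖ ^ 2) (v : H) :
    Memℓp (fun k => (⟪y k, v⟫_ℂ : ℂ)) 2 := by
  apply memℓp_gen
  have h := (hby v).1
  have he : ∀ k, ‖(⟪y k, v⟫_ℂ : ℂ)‖ = ‖(⟪v, y k⟫_ℂ : ℂ)‖ := fun k => norm_inner_symm _ _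
  simp only [ENNReal.toReal_ofNat, Real.rpow_natCast]
  convert h using 2 with k
  norm_cast
  rw [he k]

noncomputable def analysisCLM (y : ℕ → H) {b : ℝ} (hb : 0 < b)
    (hby : ∀ v : H, Summable (fun k => ‖⟪v, y k⟫_ℂ‖ ^ 2) ∧
      ∑' k, ‖⟪v, y k⟫_ℂ‖ ^ 2 ≤ b * ‖v‖ ^ 2) : H →L[ℂ] lp (fun _ : ℕ => ℂ) 2 :=
  LinearMap.mkContinuous
    { toFun := fun v => ⟨fun k => ⟪y k, v⟫_ℂ, analysis_memℓp y hby v⟩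
      map_add' := fun u v => by
        apply lp.ext
        funext k
        simp [inner_add_right]; rfl
      map_smul' := fun a v => by
        apply lp.ext
        funext k
        simp [inner_smul_right] }
    (Real.sqrt b) (fun v => by
      set f : lp (fun _ : ℕ => ℂ) 2 := ⟨fun k => ⟪y k, v⟫_ℂ, analysis_memℓp y hby v⟩
      show ‖f‖ ≤ Real.sqrt b * ‖v‖
      have h2 : ‖f‖ ^ (2:ℕ) = ∑' k, ‖f k‖ ^ (2:ℕ) := by
        have := lp.norm_rpow_eq_tsum (p := 2) (by norm_num) f
        simp only [ENNReal.toReal_ofNat] at this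
        rw [show ((2:ℝ)) = ((2:ℕ):ℝ) by norm_num] at this
        simpa [Real.rpow_natCast] using this
      have h3 : ‖f‖ ^ (2:ℕ) ≤ b * ‖v‖ ^ 2 := by
        have hfk : ∀ k, ‖f k‖ = ‖(⟪v, y k⟫_ℂ : ℂ)‖ := fun k => norm_inner_symm _ _
        rw [h2, tsum_congr fun k => by rw [hfk k]]
        exact (hby v).2
      have h4 := Real.sqrt_le_sqrt h3
      rwa [Real.sqrt_sq (norm_nonneg f), Real.sqrt_mul hb.le, Real.sqrt_sq (norm_nonneg v)] at h4)

@[simp] lemma analysisCLM_apply (y : ℕ → H) {b : ℝ} (hb : 0 < b)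
    (hby : ∀ v : H, Summable (fun k => ‖⟪v, y k⟫_ℂ‖ ^ 2) ∧
      ∑' k, ‖⟪v, y k⟫_ℂ‖ ^ 2 ≤ b * ‖v‖ ^ 2) (v : H) (k : ℕ) :
    (analysisCLM y hb hby v : ∀ _ : ℕ, ℂ) k = ⟪y k, v⟫_ℂ := rfl

/-- A complete Bessel sequence admitting a complete biorthogonal Bessel sequence is a Riesz
basis: the image of an orthonormal basis under a continuous linear isomorphism of `H`. -/
theorem riesz_basis_of_bessel_biorthogonal (x y : ℕ → H)
    (hcx : (Submodule.span ℂ (Set.range x)).topologicalClosure = ⊤)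
    (hbx : ∃ b > 0, ∀ v : H, Summable (fun k => ‖⟪v, x k⟫_ℂ‖ ^ 2) ∧
      ∑' k, ‖⟪v, x k⟫_ℂ‖ ^ 2 ≤ b * ‖v‖ ^ 2)
    (hbi : ∀ m n, ⟪x m, y n⟫_ℂ = if m = n then 1 else 0)
    (hcy : (Submodule.span ℂ (Set.range y)).topologicalClosure = ⊤)
    (hby : ∃ b > 0, ∀ v : H, Summable (fun k => ‖⟪v, y k⟫_ℂ‖ ^ 2) ∧
      ∑' k, ‖⟪v, y k⟫_ℂ‖ ^ 2 ≤ b * ‖v‖ ^ 2) :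
    ∃ (w : ℕ → H) (U : H ≃L[ℂ] H), Orthonormal ℂ w ∧
      (Submodule.span ℂ (Set.range w)).topologicalClosure = ⊤ ∧ ∀ k, x k = U (w k) := by
  obtain ⟨bx, hbx0, hbxf⟩ := hbx
  obtain ⟨by', hby0, hbyf⟩ := hby
  set S := synthesisCLM x hbx0 hbxf with hS
  set T := analysisCLM y hby0 hbyf with hT
  -- inner products of y with x
  have hyx : ∀ k m, (⟪y k, x m⟫_ℂ : ℂ) = if m = k then 1 else 0 := by
    intro k m
    rw [← inner_conj_symm, hbi m k]
    by_cases h : m = k <;> simp [h]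
  -- S of a single
  have hSsingle : ∀ m, S (lp.single 2 m 1) = x m := by
    intro m
    show (∑' k, ((lp.single 2 m 1 : lp (fun _ : ℕ => ℂ) 2) : ∀ _, ℂ) k • x k) = x m
    rw [tsum_congr (fun k => ?_), tsum_ite_eq m (fun _ => x m)]
    rw [lp.single_apply]
    by_cases h : k = m
    · subst h; simp
    · simp [h]
  -- T ∘ S = id
  have h₁ : ∀ c, T (S c) = c := by
    intro c
    apply lp.ext
    funext k
    show (⟪y k, S c⟫_ℂ : ℂ) = c k
    have hs : HasSum (fun m => (c : ∀ _, ℂ) m • x m) (S c) :=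
      (bessel_summable x hbx0 hbxf c).hasSum
    have hs2 : HasSum (fun m => (⟪y k, (c : ∀ _, ℂ) m • x m⟫_ℂ : ℂ)) ⟪y k, S c⟫_ℂ :=
      (innerSL ℂ (y k)).hasSum hs
    have hs3 : HasSum (fun m => if m = k then c m else 0) (⟪y k, S c⟫_ℂ : ℂ) := by
      convert hs2 using 2 with m
      rw [inner_smul_right, hyx k m]
      by_cases h : m = k <;> simp [h]
    have hs4 : HasSum (fun m => if m = k then c m else 0) ((c : ∀ _, ℂ) k) := by
      convert hasSum_ite_eq k ((c : ∀ _, ℂ) k) using 2 with m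
      by_cases h : m = k <;> simp [h]
    exact hs3.unique hs4
  -- S ∘ T = id
  have hdense : Dense ((Submodule.span ℂ (Set.range x) : Submodule ℂ H) : Set H) :=
    Submodule.dense_iff_topologicalClosure_eq_top.mpr hcx
  have h₂ : ∀ v, S (T v) = v := by
    have : S.comp T = ContinuousLinearMap.id ℂ H := by
      apply ContinuousLinearMap.ext_on hdense
      rintro _ ⟨m, rfl⟩
      show S (T (x m)) = x m
      have hTx : T (x m) = lp.single 2 m 1 := by
        apply lp.ext
        funext k
        show (⟪y k, x m⟫_ℂ : ℂ) = _
        rw [hyx k m, lp.single_apply]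
        by_cases h : k = m
        · subst h; simp
        · simp [h, Ne.symm h]
      rw [hTx, hSsingle]
    intro v
    exact DFunLike.congr_fun this v
  let E : lp (fun _ : ℕ => ℂ) 2 ≃L[ℂ] H := ContinuousLinearEquiv.equivOfInverse S T h₁ h₂
  -- linear independence
  have hlin : LinearIndependent ℂ x := by
    rw [linearIndependent_iff']
    intro s g hg i hi
    have h := congrArg (fun z => (⟪z, y i⟫_ℂ : ℂ)) hg
    simp only [sum_inner, inner_smul_left, inner_zero_left, hbi] at h
    rw [Finset.sum_congr rfl (fun j _ => by
      rw [mul_ite, mul_one, mul_zero])] at h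
    rw [Finset.sum_ite_eq' s i (fun j => (starRingEnd ℂ) (g j)), if_pos hi] at h
    simpa using h
  -- Gram-Schmidt orthonormal basis
  set w := InnerProductSpace.gramSchmidtNormed ℂ x with hw
  have hon : Orthonormal ℂ w := InnerProductSpace.gramSchmidtNormed_orthonormal hlin
  have hspan : Submodule.span ℂ (Set.range w) = Submodule.span ℂ (Set.range x) := by
    have h1 := InnerProductSpace.span_gramSchmidtNormed (𝕜 := ℂ) x Set.univ
    rw [Set.image_univ, Set.image_univ] at h1
    rw [hw, h1, InnerProductSpace.span_gramSchmidt ℂ x]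
  have hwtop : (Submodule.span ℂ (Set.range w)).topologicalClosure = ⊤ := by
    rw [hspan]; exact hcx
  let bb : HilbertBasis ℕ ℂ H := HilbertBasis.mk hon (le_of_eq hwtop.symm)
  let U : H ≃L[ℂ] H := bb.repr.toContinuousLinearEquiv.trans E
  refine ⟨w, U, hon, hwtop, fun k => ?_⟩
  have hbk : bb k = w k := by rw [HilbertBasis.coe_mk]
  have : U (w k) = E (bb.repr (w k)) := rfl
  rw [this, ← hbk, HilbertBasis.repr_self]
  show x k = S (lp.single 2 k 1)
  rw [hSsingle]
end
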